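/- arXiv:2309.13278 — 8 statements merged into one kernel-verified Lean document; each statement's English description precedes it below -/
import Mathlib

section
/- Fix λ ∈ ℝ and set λ⁺ := max(λ,0) and λ⁻ := −min(λ,0). For bounded measurable q and bounded measurable τ ≥ 0 define L(τ,q,π) := (1/(1−γ))·E_μ[τ(s,a)·(r(s,a) + γ·(P^π q)(s,a) − q(s,a))] + q(s⁰,π) and ξ(G,τ) := E_μ[G(τ(s,a))]/(1−γ). Let Q be a nonempty collection of measurable functions on S × A uniformly bounded in absolute value by V̄ with q^π ∈ Q. Then for every bounded measurable τ : S × A → [0,∞): inf_{q∈Q} L(τ,q,π) − λ⁻·ξ(G,τ) ≤ J(π) ≤ sup_{q∈Q} L(τ,q,π) + λ⁺·ξ(G,τ); in particular, for any nonempty collection Ω of bounded measurable nonnegative functions on S × A, J⁻(π) := sup_{τ∈Ω}(inf_{q∈Q} L(τ,q,π) − λ⁻·ξ(G,τ)) ≤ J(π) ≤ inf_{τ∈Ω}(sup_{q∈Q} L(τ,q,π) + λ⁺·ξ(G,τ)) =: J⁺(π). (Validity of the value interval.) -/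
open MeasureTheory ProbabilityTheory

/-- `q(s,π) := ∫_A q(s,a) π(da|s)`. -/
noncomputable def actInt {S A : Type*} [MeasurableSpace S] [MeasurableSpace A]
    (π : Kernel S A) (q : S × A → ℝ) (s : S) : ℝ :=
  ∫ a, q (s, a) ∂(π s)

/-- `(P^π q)(s,a) := ∫_S q(s',π) P(ds'|s,a)`. -/
noncomputable def bellOp {S A : Type*} [MeasurableSpace S] [MeasurableSpace A]
    (P : Kernel (S × A) S) (π : Kernel S A) (q : S × A → ℝ) (sa : S × A) : ℝ :=
  ∫ s', actInt π q s' ∂(P sa)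

/-- `L(τ,q,π) := (1/(1−γ))·E_μ[τ(s,a)·(r(s,a) + γ·(P^π q)(s,a) − q(s,a))] + q(s⁰,π)`. -/
noncomputable def Lval {S A : Type*} [MeasurableSpace S] [MeasurableSpace A]
    (μ : Measure (S × A)) (γ : ℝ) (r : S × A → ℝ)
    (P : Kernel (S × A) S) (π : Kernel S A) (s0 : S) (τ q : S × A → ℝ) : ℝ :=
  (1 / (1 - γ)) * (∫ sa, τ sa * (r sa + γ * bellOp P π q sa - q sa) ∂μ) + actInt π q s0

/-- `ξ(G,τ) := E_μ[G(τ(s,a))]/(1−γ)`. -/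
noncomputable def xiG {S A : Type*} [MeasurableSpace S] [MeasurableSpace A]
    (μ : Measure (S × A)) (γ : ℝ) (G : ℝ → ℝ) (τ : S × A → ℝ) : ℝ :=
  (∫ sa, G (τ sa) ∂μ) / (1 - γ)

/-!
Since `q^π` satisfies the Bellman equation, the Bellman residual `r + γ P^π q^π - q^π` vanishes,
so `L(τ, q^π, π) = J(π)` for every weight `τ`; as `q^π ∈ Q`, this value lies between the infimum
and the supremum of `L(τ, ·, π)` over `Q`, which are finite because `τ`, `r` and `Q` are bounded.
The penalties `λ⁻ ξ(G, τ)` and `λ⁺ ξ(G, τ)` are nonnegative since `G ≥ 0` and `γ < 1`.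
-/

lemma abs_integral_le_of_forall_abs_le {α : Type*} [MeasurableSpace α] (ν : Measure α)
    [IsProbabilityMeasure ν] {f : α → ℝ} {C : ℝ} (h : ∀ x, |f x| ≤ C) : |∫ x, f x ∂ν| ≤ C := by
  simpa using norm_integral_le_of_norm_le_const (μ := ν) (f := f) (Filter.Eventually.of_forall h)

section ValueInterval

variable {S A : Type*} [MeasurableSpace S] [MeasurableSpace A]

lemma abs_actInt_le (π : Kernel S A) [IsMarkovKernel π] {q : S × A → ℝ} {V : ℝ}
    (hq : ∀ sa, |q sa| ≤ V) (s : S) : |actInt π q s| ≤ V :=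
  abs_integral_le_of_forall_abs_le (π s) fun a => hq (s, a)

lemma abs_bellOp_le (P : Kernel (S × A) S) [IsMarkovKernel P] (π : Kernel S A) [IsMarkovKernel π]
    {q : S × A → ℝ} {V : ℝ} (hq : ∀ sa, |q sa| ≤ V) (sa : S × A) : |bellOp P π q sa| ≤ V :=
  abs_integral_le_of_forall_abs_le (P sa) (abs_actInt_le π hq)

lemma Lval_eq_actInt_of_bellman (μ : Measure (S × A)) {γ : ℝ} {r : S × A → ℝ}
    {P : Kernel (S × A) S} {π : Kernel S A} (s0 : S) (τ : S × A → ℝ) {q : S × A → ℝ}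
    (hq : ∀ sa, q sa = r sa + γ * bellOp P π q sa) :
    Lval μ γ r P π s0 τ q = actInt π q s0 := by
  have hresidual : ∀ sa, τ sa * (r sa + γ * bellOp P π q sa - q sa) = 0 := fun sa => by
    rw [← hq sa, sub_self, mul_zero]
  simp [Lval, hresidual]

lemma abs_Lval_le (μ : Measure (S × A)) [IsProbabilityMeasure μ] (γ : ℝ) {r : S × A → ℝ}
    {Br : ℝ} (hr : ∀ sa, |r sa| ≤ Br) (P : Kernel (S × A) S) [IsMarkovKernel P]
    (π : Kernel S A) [IsMarkovKernel π] (s0 : S) {τ : S × A → ℝ} {B : ℝ}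
    (hτ : ∀ sa, |τ sa| ≤ B) {q : S × A → ℝ} {V : ℝ} (hq : ∀ sa, |q sa| ≤ V) :
    |Lval μ γ r P π s0 τ q| ≤ |1 / (1 - γ)| * (B * (Br + |γ| * V + V)) + V := by
  have hresidual : ∀ sa, |r sa + γ * bellOp P π q sa - q sa| ≤ Br + |γ| * V + V := fun sa =>
    calc |r sa + γ * bellOp P π q sa - q sa|
        ≤ |r sa| + |γ| * |bellOp P π q sa| + |q sa| := by
          grw [abs_sub, abs_add_le, abs_mul]
      _ ≤ Br + |γ| * V + V := by grw [hr sa, abs_bellOp_le P π hq sa, hq sa]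
  have hintegral : |∫ sa, τ sa * (r sa + γ * bellOp P π q sa - q sa) ∂μ|
      ≤ B * (Br + |γ| * V + V) :=
    abs_integral_le_of_forall_abs_le μ fun sa => by
      rw [abs_mul]
      exact mul_le_mul (hτ sa) (hresidual sa) (abs_nonneg _) ((abs_nonneg _).trans (hτ sa))
  calc |Lval μ γ r P π s0 τ q|
      ≤ |1 / (1 - γ)| * |∫ sa, τ sa * (r sa + γ * bellOp P π q sa - q sa) ∂μ|
          + |actInt π q s0| := by
        grw [Lval, abs_add_le, abs_mul]
    _ ≤ |1 / (1 - γ)| * (B * (Br + |γ| * V + V)) + V := by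
        grw [hintegral, abs_actInt_le π hq s0]

lemma isBounded_range_Lval (μ : Measure (S × A)) [IsProbabilityMeasure μ] (γ : ℝ)
    {r : S × A → ℝ} {Br : ℝ} (hr : ∀ sa, |r sa| ≤ Br) (P : Kernel (S × A) S) [IsMarkovKernel P]
    (π : Kernel S A) [IsMarkovKernel π] (s0 : S) {τ : S × A → ℝ} (hτ : ∃ B, ∀ sa, |τ sa| ≤ B)
    {Q : Set (S × A → ℝ)} {V : ℝ} (hQ : ∀ q ∈ Q, ∀ sa, |q sa| ≤ V) :
    Bornology.IsBounded (Set.range fun q : Q => Lval μ γ r P π s0 τ q.1) := by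
  obtain ⟨B, hB⟩ := hτ
  exact isBounded_iff_forall_norm_le.2 ⟨_, by
    rintro _ ⟨q, rfl⟩
    exact abs_Lval_le μ γ hr P π s0 hB (hQ q.1 q.2)⟩

lemma xiG_nonneg (μ : Measure (S × A)) {γ : ℝ} (hγ : γ < 1) {G : ℝ → ℝ} (hG : ∀ x, 0 ≤ G x)
    (τ : S × A → ℝ) : 0 ≤ xiG μ γ G τ :=
  div_nonneg (integral_nonneg fun _ => hG _) (sub_nonneg.2 hγ.le)

lemma ciInf_Lval_le_actInt_le_ciSup (μ : Measure (S × A)) [IsProbabilityMeasure μ] {γ : ℝ}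
    {r : S × A → ℝ} {Br : ℝ} (hr : ∀ sa, |r sa| ≤ Br) (P : Kernel (S × A) S) [IsMarkovKernel P]
    (π : Kernel S A) [IsMarkovKernel π] (s0 : S) {τ : S × A → ℝ} (hτ : ∃ B, ∀ sa, |τ sa| ≤ B)
    {Q : Set (S × A → ℝ)} {V : ℝ} (hQ : ∀ q ∈ Q, ∀ sa, |q sa| ≤ V) {qpi : S × A → ℝ}
    (hqpi : ∀ sa, qpi sa = r sa + γ * bellOp P π qpi sa) (hqpiQ : qpi ∈ Q) :
    (⨅ q : Q, Lval μ γ r P π s0 τ q.1) ≤ actInt π qpi s0 ∧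
      actInt π qpi s0 ≤ ⨆ q : Q, Lval μ γ r P π s0 τ q.1 := by
  have hbdd := isBounded_range_Lval μ γ hr P π s0 hτ hQ
  rw [← Lval_eq_actInt_of_bellman μ s0 τ hqpi]
  exact ⟨ciInf_le hbdd.bddBelow ⟨qpi, hqpiQ⟩, le_ciSup hbdd.bddAbove ⟨qpi, hqpiQ⟩⟩

end ValueInterval

theorem stmt_1_general
    {S A : Type*} [MeasurableSpace S] [MeasurableSpace A]
    (γ : ℝ) (hγ1 : γ < 1)
    (r : S × A → ℝ) (Br : ℝ) (hr_bdd : ∀ sa, |r sa| ≤ Br)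
    (P : Kernel (S × A) S) [IsMarkovKernel P]
    (π : Kernel S A) [IsMarkovKernel π]
    (s0 : S)
    (μ : Measure (S × A)) [IsProbabilityMeasure μ]
    (qpi : S × A → ℝ) (hBellman : ∀ sa, qpi sa = r sa + γ * bellOp P π qpi sa)
    (G : ℝ → ℝ) (hG_nonneg : ∀ x, 0 ≤ G x)
    (lam : ℝ)
    (V : ℝ)
    (Qset : Set (S × A → ℝ))
    (hQ_bdd : ∀ q ∈ Qset, ∀ sa, |q sa| ≤ V)
    (hqpiQ : qpi ∈ Qset) :
    (∀ τ : S × A → ℝ, Measurable τ → (∀ sa, 0 ≤ τ sa) → (∃ B, ∀ sa, τ sa ≤ B) →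
      (⨅ q : Qset, Lval μ γ r P π s0 τ q.1) - (-(min lam 0)) * xiG μ γ G τ
          ≤ actInt π qpi s0
        ∧ actInt π qpi s0
          ≤ (⨆ q : Qset, Lval μ γ r P π s0 τ q.1) + (max lam 0) * xiG μ γ G τ)
    ∧ (∀ Ωset : Set (S × A → ℝ), Ωset.Nonempty →
        (∀ τ ∈ Ωset, Measurable τ ∧ (∀ sa, 0 ≤ τ sa) ∧ ∃ B, ∀ sa, τ sa ≤ B) →
        (⨆ τ : Ωset,
            ((⨅ q : Qset, Lval μ γ r P π s0 τ.1 q.1) - (-(min lam 0)) * xiG μ γ G τ.1))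
            ≤ actInt π qpi s0
          ∧ actInt π qpi s0
            ≤ ⨅ τ : Ωset,
                ((⨆ q : Qset, Lval μ γ r P π s0 τ.1 q.1) + (max lam 0) * xiG μ γ G τ.1)) := by
  have hinterval : ∀ τ : S × A → ℝ, Measurable τ → (∀ sa, 0 ≤ τ sa) → (∃ B, ∀ sa, τ sa ≤ B) →
      (⨅ q : Qset, Lval μ γ r P π s0 τ q.1) - (-(min lam 0)) * xiG μ γ G τ
          ≤ actInt π qpi s0
        ∧ actInt π qpi s0
          ≤ (⨆ q : Qset, Lval μ γ r P π s0 τ q.1) + (max lam 0) * xiG μ γ G τ := by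
    rintro τ - hτ0 ⟨B, hτB⟩
    have hτ : ∃ B, ∀ sa, |τ sa| ≤ B := ⟨B, fun sa => (abs_of_nonneg (hτ0 sa)).trans_le (hτB sa)⟩
    obtain ⟨hinf, hsup⟩ := ciInf_Lval_le_actInt_le_ciSup μ hr_bdd P π s0 hτ hQ_bdd hBellman hqpiQ
    have hξ := xiG_nonneg μ hγ1 hG_nonneg τ
    have hneg := mul_nonneg (neg_nonneg.2 (min_le_right lam 0)) hξ
    have hpos := mul_nonneg (le_max_right lam 0) hξ
    constructor <;> linarith
  refine ⟨hinterval, fun Ωset hΩ hadm => ?_⟩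
  have := hΩ.to_subtype
  have hbounds (τ : Ωset) :=
    hinterval τ.1 (hadm τ.1 τ.2).1 (hadm τ.1 τ.2).2.1 (hadm τ.1 τ.2).2.2
  exact ⟨ciSup_le fun τ => (hbounds τ).1, le_ciInf fun τ => (hbounds τ).2⟩

/-- validity of the value interval. -/
theorem stmt_1
    {S A : Type*} [MeasurableSpace S] [MeasurableSpace A]
    (γ : ℝ) (hγ0 : 0 ≤ γ) (hγ1 : γ < 1)
    (r : S × A → ℝ) (hr_meas : Measurable r) (Br : ℝ) (hr_bdd : ∀ sa, |r sa| ≤ Br)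
    (P : Kernel (S × A) S) [IsMarkovKernel P]
    (π : Kernel S A) [IsMarkovKernel π]
    (s0 : S)
    (μ : Measure (S × A)) [IsProbabilityMeasure μ]
    (qpi : S × A → ℝ) (hq_meas : Measurable qpi)
    (hBellman : ∀ sa, qpi sa = r sa + γ * bellOp P π qpi sa)
    (G : ℝ → ℝ) (M : ℝ) (hM : 0 < M)
    (hG_diff : Differentiable ℝ G)
    (hG_conv : ConvexOn ℝ Set.univ (fun x => G x - M / 2 * x ^ 2))
    (hG_nonneg : ∀ x, 0 ≤ G x) (hG_one : G 1 = 0)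
    (lam : ℝ)
    (V : ℝ) (hV : 0 < V)
    (Qset : Set (S × A → ℝ))
    (hQ_meas : ∀ q ∈ Qset, Measurable q)
    (hQ_bdd : ∀ q ∈ Qset, ∀ sa, |q sa| ≤ V)
    (hqpiQ : qpi ∈ Qset) :
    (∀ τ : S × A → ℝ, Measurable τ → (∀ sa, 0 ≤ τ sa) → (∃ B, ∀ sa, τ sa ≤ B) →
      (⨅ q : Qset, Lval μ γ r P π s0 τ q.1) - (-(min lam 0)) * xiG μ γ G τ
          ≤ actInt π qpi s0
        ∧ actInt π qpi s0
          ≤ (⨆ q : Qset, Lval μ γ r P π s0 τ q.1) + (max lam 0) * xiG μ γ G τ)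
    ∧ (∀ Ωset : Set (S × A → ℝ), Ωset.Nonempty →
        (∀ τ ∈ Ωset, Measurable τ ∧ (∀ sa, 0 ≤ τ sa) ∧ ∃ B, ∀ sa, τ sa ≤ B) →
        (⨆ τ : Ωset,
            ((⨅ q : Qset, Lval μ γ r P π s0 τ.1 q.1) - (-(min lam 0)) * xiG μ γ G τ.1))
            ≤ actInt π qpi s0
          ∧ actInt π qpi s0
            ≤ ⨅ τ : Ωset,
                ((⨆ q : Qset, Lval μ γ r P π s0 τ.1 q.1) + (max lam 0) * xiG μ γ G τ.1)) :=
  stmt_1_general γ hγ1 r Br hr_bdd P π s0 μ qpi hBellman G hG_nonneg lam V Qset hQ_bdd hqpiQ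
end

section
/- Let Q be a countable collection of measurable functions on S × A uniformly bounded in absolute value by V̄ with q^π ∈ Q, and let Ω be a countable collection of bounded measurable nonnegative functions on S × A. Let δ ∈ (0,1) and let σ_n be a nonnegative random variable such that P( sup_{τ∈Ω} |L̂_n(q^π,τ)| ≤ σ_n ) ≥ 1−δ. Then, with probability at least 1−δ, simultaneously for all τ ∈ Ω: (1/(n(1−γ)))·Σ_{i=1}^n r_i·τ(s_i,a_i) − sup_{q∈Q} M̂_n(−q,τ) − σ_n ≤ J(π) ≤ (1/(n(1−γ)))·Σ_{i=1}^n r_i·τ(s_i,a_i) + sup_{q∈Q} M̂_n(q,τ) + σ_n. (Theorem 3.2, neutral confidence interval.) -/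
open MeasureTheory ProbabilityTheory

/-- `L̂_n(q,τ) := (1/(n(1−γ))) Σᵢ τ(sᵢ,aᵢ)(q(sᵢ,aᵢ) − rᵢ − γ q(s'ᵢ,π))` (random data). -/
noncomputable def LhatN {S A Ω₀ : Type*} [MeasurableSpace S] [MeasurableSpace A]
    (γ : ℝ) (π : Kernel S A) (n : ℕ)
    (sa : Fin n → Ω₀ → S × A) (rew : Fin n → Ω₀ → ℝ) (s' : Fin n → Ω₀ → S)
    (q τ : S × A → ℝ) (ω : Ω₀) : ℝ :=
  (1 / (n * (1 - γ))) *
    ∑ i, τ (sa i ω) * (q (sa i ω) - rew i ω - γ * actInt π q (s' i ω))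

/-- `M̂_n(q,τ) := (1/(n(1−γ))) Σᵢ τ(sᵢ,aᵢ)(γ q(s'ᵢ,π) − q(sᵢ,aᵢ)) + q(s⁰,π)` (random data). -/
noncomputable def MhatN {S A Ω₀ : Type*} [MeasurableSpace S] [MeasurableSpace A]
    (γ : ℝ) (π : Kernel S A) (s0 : S) (n : ℕ)
    (sa : Fin n → Ω₀ → S × A) (s' : Fin n → Ω₀ → S)
    (q τ : S × A → ℝ) (ω : Ω₀) : ℝ :=
  (1 / (n * (1 - γ))) *
      (∑ i, τ (sa i ω) * (γ * actInt π q (s' i ω) - q (sa i ω)))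
    + actInt π q s0


lemma actInt_abs_le {S A : Type*} [MeasurableSpace S] [MeasurableSpace A]
    (π : Kernel S A) [IsMarkovKernel π] (q : S × A → ℝ) (V : ℝ)
    (hq : ∀ x, |q x| ≤ V) (s : S) : |actInt π q s| ≤ V := by
  have := norm_integral_le_of_norm_le_const (μ := π s) (f := fun a => q (s, a)) (C := V)
    (Filter.Eventually.of_forall fun a => by simpa [Real.norm_eq_abs] using hq (s, a))
  simpa [actInt, Real.norm_eq_abs] using this

lemma Mhat_key {S A Ω₀ : Type*} [MeasurableSpace S] [MeasurableSpace A]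
    (γ : ℝ) (π : Kernel S A) (s0 : S) (n : ℕ)
    (sa : Fin n → Ω₀ → S × A) (rew : Fin n → Ω₀ → ℝ) (s' : Fin n → Ω₀ → S)
    (q τ : S × A → ℝ) (ω : Ω₀) :
    MhatN γ π s0 n sa s' q τ ω + LhatN γ π n sa rew s' q τ ω
      + (1 / (n * (1 - γ))) * ∑ i, rew i ω * τ (sa i ω) = actInt π q s0 := by
  unfold MhatN LhatN
  have h : (∑ i, τ (sa i ω) * (γ * actInt π q (s' i ω) - q (sa i ω)))
      + (∑ i, τ (sa i ω) * (q (sa i ω) - rew i ω - γ * actInt π q (s' i ω)))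
      + (∑ i, rew i ω * τ (sa i ω)) = 0 := by
    rw [← Finset.sum_add_distrib, ← Finset.sum_add_distrib]
    exact Finset.sum_eq_zero fun i _ => by ring
  linear_combination (1 / ((n : ℝ) * (1 - γ))) * h

lemma Mhat_neg {S A Ω₀ : Type*} [MeasurableSpace S] [MeasurableSpace A]
    (γ : ℝ) (π : Kernel S A) (s0 : S) (n : ℕ)
    (sa : Fin n → Ω₀ → S × A) (s' : Fin n → Ω₀ → S)
    (q τ : S × A → ℝ) (ω : Ω₀) :
    MhatN γ π s0 n sa s' (fun x => -(q x)) τ ω = - MhatN γ π s0 n sa s' q τ ω := by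
  unfold MhatN actInt
  simp only [integral_neg]
  have h : (∑ i, τ (sa i ω) * (γ * -(∫ a, q ((s' i ω), a) ∂π (s' i ω)) - -q (sa i ω)))
      = -∑ i, τ (sa i ω) * (γ * (∫ a, q ((s' i ω), a) ∂π (s' i ω)) - q (sa i ω)) := by
    rw [← Finset.sum_neg_distrib]
    exact Finset.sum_congr rfl fun i _ => by ring
  rw [h]; ring

lemma Mhat_abs_le {S A Ω₀ : Type*} [MeasurableSpace S] [MeasurableSpace A]
    (γ : ℝ) (hγ0 : 0 ≤ γ) (hγ1 : γ < 1)
    (π : Kernel S A) [IsMarkovKernel π] (s0 : S) (n : ℕ)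
    (sa : Fin n → Ω₀ → S × A) (s' : Fin n → Ω₀ → S)
    (q τ : S × A → ℝ) (ω : Ω₀) (V B : ℝ) (hV : 0 < V)
    (hq : ∀ x, |q x| ≤ V) (hτ0 : ∀ x, 0 ≤ τ x) (hτB : ∀ x, τ x ≤ B) :
    |MhatN γ π s0 n sa s' q τ ω| ≤ |1 / ((n : ℝ) * (1 - γ))| * (n * (B * (2 * V))) + V := by
  unfold MhatN
  have hsum : |∑ i, τ (sa i ω) * (γ * actInt π q (s' i ω) - q (sa i ω))|
      ≤ n * (B * (2 * V)) := by
    calc |∑ i, τ (sa i ω) * (γ * actInt π q (s' i ω) - q (sa i ω))|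
        ≤ ∑ i, |τ (sa i ω) * (γ * actInt π q (s' i ω) - q (sa i ω))| :=
          Finset.abs_sum_le_sum_abs _ _
      _ ≤ ∑ _i : Fin n, B * (2 * V) := by
          apply Finset.sum_le_sum
          intro i _
          rw [abs_mul]
          have h1 : |τ (sa i ω)| ≤ B := by
            rw [abs_of_nonneg (hτ0 _)]; exact hτB _
          have h2 : |γ * actInt π q (s' i ω) - q (sa i ω)| ≤ 2 * V := by
            have ha := actInt_abs_le π q V hq (s' i ω)
            have hb := hq (sa i ω)
            have : |γ * actInt π q (s' i ω)| ≤ V := by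
              rw [abs_mul, abs_of_nonneg hγ0]
              nlinarith [abs_nonneg (actInt π q (s' i ω))]
            calc |γ * actInt π q (s' i ω) - q (sa i ω)|
                ≤ |γ * actInt π q (s' i ω)| + |q (sa i ω)| := abs_sub _ _
              _ ≤ 2 * V := by linarith
          have hB0 : 0 ≤ B := le_trans (hτ0 (sa i ω)) (hτB (sa i ω))
          exact mul_le_mul h1 h2 (abs_nonneg _) hB0
      _ = n * (B * (2 * V)) := by simp [Finset.sum_const, mul_comm]
  calc |(1 / ((n : ℝ) * (1 - γ))) *
        (∑ i, τ (sa i ω) * (γ * actInt π q (s' i ω) - q (sa i ω))) + actInt π q s0|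
      ≤ |(1 / ((n : ℝ) * (1 - γ))) *
        (∑ i, τ (sa i ω) * (γ * actInt π q (s' i ω) - q (sa i ω)))| + |actInt π q s0| :=
        abs_add_le _ _
    _ ≤ |1 / ((n : ℝ) * (1 - γ))| * (n * (B * (2 * V))) + V := by
        rw [abs_mul]
        have := actInt_abs_le π q V hq s0
        have h2 := mul_le_mul_of_nonneg_left hsum (abs_nonneg (1 / ((n : ℝ) * (1 - γ))))
        linarith

/-- Theorem 3.2, neutral confidence interval. -/
theorem stmt_4
    {S A Ω₀ : Type*} [MeasurableSpace S] [MeasurableSpace A] [MeasurableSpace Ω₀]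
    (Pr : Measure Ω₀) [IsProbabilityMeasure Pr]
    (γ : ℝ) (hγ0 : 0 ≤ γ) (hγ1 : γ < 1)
    (r : S × A → ℝ) (hr_meas : Measurable r) (Br : ℝ) (hr_bdd : ∀ x, |r x| ≤ Br)
    (P : Kernel (S × A) S) [IsMarkovKernel P]
    (π : Kernel S A) [IsMarkovKernel π]
    (s0 : S)
    (V : ℝ) (hV : 0 < V)
    (qpi : S × A → ℝ) (hq_meas : Measurable qpi) (hq_bdd : ∀ x, |qpi x| ≤ V)
    (hBellman : ∀ x, qpi x = r x + γ * bellOp P π qpi x)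
    (n : ℕ) (hn : 0 < n)
    (sa : Fin n → Ω₀ → S × A) (rew : Fin n → Ω₀ → ℝ) (s' : Fin n → Ω₀ → S)
    (hsa_meas : ∀ i, Measurable (sa i)) (hrew_meas : ∀ i, Measurable (rew i))
    (hs'_meas : ∀ i, Measurable (s' i))
    (Qset : Set (S × A → ℝ))
    (hQcnt : Qset.Countable)
    (hQ_meas : ∀ q ∈ Qset, Measurable q)
    (hQ_bdd : ∀ q ∈ Qset, ∀ x, |q x| ≤ V)
    (hqpiQ : qpi ∈ Qset)
    (Ωset : Set (S × A → ℝ))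
    (hΩcnt : Ωset.Countable)
    (hΩ : ∀ τ ∈ Ωset, Measurable τ ∧ (∀ x, 0 ≤ τ x) ∧ ∃ B, ∀ x, τ x ≤ B)
    (δ : ℝ) (hδ : δ ∈ Set.Ioo (0 : ℝ) 1)
    (σn : Ω₀ → ℝ) (hσ_meas : Measurable σn) (hσ_nonneg : ∀ ω, 0 ≤ σn ω)
    (hdev : ENNReal.ofReal (1 - δ) ≤
      Pr {ω | ∀ τ ∈ Ωset, |LhatN γ π n sa rew s' qpi τ ω| ≤ σn ω}) :
    ENNReal.ofReal (1 - δ) ≤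
      Pr {ω | ∀ τ ∈ Ωset,
        (1 / (n * (1 - γ))) * (∑ i, rew i ω * τ (sa i ω))
            - (⨆ q : Qset, MhatN γ π s0 n sa s' (fun x => -(q.1 x)) τ ω) - σn ω
          ≤ actInt π qpi s0
        ∧ actInt π qpi s0
          ≤ (1 / (n * (1 - γ))) * (∑ i, rew i ω * τ (sa i ω))
              + (⨆ q : Qset, MhatN γ π s0 n sa s' q.1 τ ω) + σn ω} := by
  refine le_trans hdev (measure_mono ?_)
  intro ω hω τ hτ
  have hL := hω τ hτ
  obtain ⟨hτm, hτ0, B, hτB⟩ := hΩ τ hτ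
  have habs := abs_le.mp hL
  set M : ℝ := |1 / ((n : ℝ) * (1 - γ))| * (n * (B * (2 * V))) + V with hM
  have hbdd1 : BddAbove (Set.range fun q : Qset => MhatN γ π s0 n sa s' q.1 τ ω) := by
    refine ⟨M, ?_⟩
    rintro x ⟨q, rfl⟩
    exact le_trans (le_abs_self _)
      (Mhat_abs_le γ hγ0 hγ1 π s0 n sa s' q.1 τ ω V B hV (hQ_bdd q.1 q.2) hτ0 hτB)
  have hbdd2 : BddAbove (Set.range fun q : Qset =>
      MhatN γ π s0 n sa s' (fun x => -(q.1 x)) τ ω) := by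
    refine ⟨M, ?_⟩
    rintro x ⟨q, rfl⟩
    refine le_trans (le_abs_self _)
      (Mhat_abs_le γ hγ0 hγ1 π s0 n sa s' _ τ ω V B hV (fun x => ?_) hτ0 hτB)
    simpa [abs_neg] using hQ_bdd q.1 q.2 x
  have h1 : MhatN γ π s0 n sa s' qpi τ ω
      ≤ ⨆ q : Qset, MhatN γ π s0 n sa s' q.1 τ ω :=
    le_ciSup hbdd1 ⟨qpi, hqpiQ⟩
  have h2 : MhatN γ π s0 n sa s' (fun x => -(qpi x)) τ ω
      ≤ ⨆ q : Qset, MhatN γ π s0 n sa s' (fun x => -(q.1 x)) τ ω :=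
    le_ciSup hbdd2 ⟨qpi, hqpiQ⟩
  have hkey := Mhat_key γ π s0 n sa rew s' qpi τ ω
  have hneg := Mhat_neg γ π s0 n sa s' qpi τ ω
  rw [hneg] at h2
  constructor <;> linarith
end

section
/- Let λ⁻ ≥ 0, let Q be a countable collection of measurable functions on S × A uniformly bounded in absolute value by V̄ with q^π ∈ Q, and let Ω be a countable collection of bounded measurable nonnegative functions on S × A. Let δ ∈ (0,1) and let σ^U_n and σ^L_n be nonnegative random variables such that P( {sup_{τ∈Ω} L̂_n(q^π,τ) ≤ σ^U_n} ∩ {inf_{τ∈Ω} ( L̂_n(q^π,τ) + λ⁻·ξ_n(G,τ) ) ≥ −σ^L_n} ) ≥ 1−δ. Then, with probability at least 1−δ, simultaneously for all τ ∈ Ω: (1/(n(1−γ)))·Σ_{i=1}^n r_i·τ(s_i,a_i) − sup_{q∈Q} M̂_n(−q,τ) − λ⁻·ξ_n(G,τ) − σ^L_n ≤ J(π) ≤ (1/(n(1−γ)))·Σ_{i=1}^n r_i·τ(s_i,a_i) + sup_{q∈Q} M̂_n(q,τ) + σ^U_n. (Theorem 3.4, pessimistic confidence interval.) -/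
open MeasureTheory ProbabilityTheory

/-- `ξ_n(G,τ) := (1/(n(1−γ))) Σᵢ G(τ(sᵢ,aᵢ))` (random data). -/
noncomputable def xinG {S A Ω₀ : Type*} [MeasurableSpace S] [MeasurableSpace A]
    (γ : ℝ) (G : ℝ → ℝ) (n : ℕ) (sa : Fin n → Ω₀ → S × A)
    (τ : S × A → ℝ) (ω : Ω₀) : ℝ :=
  (1 / (n * (1 - γ))) * ∑ i, G (τ (sa i ω))

/-- Theorem 3.4, pessimistic confidence interval. -/
theorem stmt_5
    {S A Ω₀ : Type*} [MeasurableSpace S] [MeasurableSpace A] [MeasurableSpace Ω₀]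
    (Pr : Measure Ω₀) [IsProbabilityMeasure Pr]
    (γ : ℝ) (hγ0 : 0 ≤ γ) (hγ1 : γ < 1)
    (r : S × A → ℝ) (hr_meas : Measurable r) (Br : ℝ) (hr_bdd : ∀ x, |r x| ≤ Br)
    (P : Kernel (S × A) S) [IsMarkovKernel P]
    (π : Kernel S A) [IsMarkovKernel π]
    (s0 : S)
    (V : ℝ) (hV : 0 < V)
    (qpi : S × A → ℝ) (hq_meas : Measurable qpi) (hq_bdd : ∀ x, |qpi x| ≤ V)
    (hBellman : ∀ x, qpi x = r x + γ * bellOp P π qpi x)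
    (G : ℝ → ℝ) (M : ℝ) (hM : 0 < M)
    (hG_diff : Differentiable ℝ G)
    (hG_conv : ConvexOn ℝ Set.univ (fun x => G x - M / 2 * x ^ 2))
    (hG_nonneg : ∀ x, 0 ≤ G x) (hG_one : G 1 = 0)
    (lamm : ℝ) (hlamm : 0 ≤ lamm)
    (n : ℕ) (hn : 0 < n)
    (sa : Fin n → Ω₀ → S × A) (rew : Fin n → Ω₀ → ℝ) (s' : Fin n → Ω₀ → S)
    (hsa_meas : ∀ i, Measurable (sa i)) (hrew_meas : ∀ i, Measurable (rew i))
    (hs'_meas : ∀ i, Measurable (s' i))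
    (Qset : Set (S × A → ℝ))
    (hQcnt : Qset.Countable)
    (hQ_meas : ∀ q ∈ Qset, Measurable q)
    (hQ_bdd : ∀ q ∈ Qset, ∀ x, |q x| ≤ V)
    (hqpiQ : qpi ∈ Qset)
    (Ωset : Set (S × A → ℝ))
    (hΩcnt : Ωset.Countable)
    (hΩ : ∀ τ ∈ Ωset, Measurable τ ∧ (∀ x, 0 ≤ τ x) ∧ ∃ B, ∀ x, τ x ≤ B)
    (δ : ℝ) (hδ : δ ∈ Set.Ioo (0 : ℝ) 1)
    (σU σL : Ω₀ → ℝ) (hσU_meas : Measurable σU) (hσL_meas : Measurable σL)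
    (hσU_nonneg : ∀ ω, 0 ≤ σU ω) (hσL_nonneg : ∀ ω, 0 ≤ σL ω)
    (hdev : ENNReal.ofReal (1 - δ) ≤
      Pr {ω | (∀ τ ∈ Ωset, LhatN γ π n sa rew s' qpi τ ω ≤ σU ω)
            ∧ (∀ τ ∈ Ωset,
                -(σL ω) ≤ LhatN γ π n sa rew s' qpi τ ω + lamm * xinG γ G n sa τ ω)}) :
    ENNReal.ofReal (1 - δ) ≤
      Pr {ω | ∀ τ ∈ Ωset,
        (1 / (n * (1 - γ))) * (∑ i, rew i ω * τ (sa i ω))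
            - (⨆ q : Qset, MhatN γ π s0 n sa s' (fun x => -(q.1 x)) τ ω)
            - lamm * xinG γ G n sa τ ω - σL ω
          ≤ actInt π qpi s0
        ∧ actInt π qpi s0
          ≤ (1 / (n * (1 - γ))) * (∑ i, rew i ω * τ (sa i ω))
              + (⨆ q : Qset, MhatN γ π s0 n sa s' q.1 τ ω) + σU ω} := by
  refine le_trans hdev (measure_mono ?_)
  rintro ω ⟨hU, hL⟩ τ hτ
  obtain ⟨hτm, hτ0, B, hτB⟩ := hΩ τ hτ
  have hnR : (0:ℝ) < n := by exact_mod_cast hn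
  have hKpos : (0:ℝ) < n * (1 - γ) := mul_pos hnR (by linarith)
  have hK : (0:ℝ) ≤ 1 / (n * (1 - γ)) := by positivity
  have hVnn : (0:ℝ) ≤ V := hV.le
  have hBnn : (0:ℝ) ≤ B := le_trans (hτ0 (sa ⟨0, hn⟩ ω)) (hτB (sa ⟨0, hn⟩ ω))
  -- bound on actInt
  have haI : ∀ q : S × A → ℝ, (∀ x, |q x| ≤ V) → ∀ s : S, |actInt π q s| ≤ V := by
    intro q hq s
    have h := norm_integral_le_of_norm_le_const (μ := π s) (f := fun a => q (s, a)) (C := V)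
      (Filter.Eventually.of_forall fun a => by simpa using hq (s, a))
    simpa [actInt] using h
  -- uniform bound on MhatN over bounded q
  have hMb : ∀ q : S × A → ℝ, (∀ x, |q x| ≤ V) →
      MhatN γ π s0 n sa s' q τ ω ≤ (1 / (n * (1 - γ))) * (n * (B * (γ * V + V))) + V := by
    intro q hq
    have hsum : ∑ i, τ (sa i ω) * (γ * actInt π q (s' i ω) - q (sa i ω))
        ≤ n * (B * (γ * V + V)) := by
      have hterm : ∀ i : Fin n, τ (sa i ω) * (γ * actInt π q (s' i ω) - q (sa i ω))
          ≤ B * (γ * V + V) := by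
        intro i
        have h1 := abs_le.1 (haI q hq (s' i ω))
        have h2 := abs_le.1 (hq (sa i ω))
        have h3 : γ * actInt π q (s' i ω) - q (sa i ω) ≤ γ * V + V := by nlinarith
        calc τ (sa i ω) * (γ * actInt π q (s' i ω) - q (sa i ω))
            ≤ τ (sa i ω) * (γ * V + V) := by
              exact mul_le_mul_of_nonneg_left h3 (hτ0 _)
          _ ≤ B * (γ * V + V) := by
              exact mul_le_mul_of_nonneg_right (hτB _) (by nlinarith)
      calc ∑ i, τ (sa i ω) * (γ * actInt π q (s' i ω) - q (sa i ω))
          ≤ ∑ _i : Fin n, B * (γ * V + V) := Finset.sum_le_sum fun i _ => hterm i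
        _ = n * (B * (γ * V + V)) := by
            simp [Finset.sum_const, Finset.card_univ, mul_comm]
    have h4 : actInt π q s0 ≤ V := (abs_le.1 (haI q hq s0)).2
    have h5 := mul_le_mul_of_nonneg_left hsum hK
    unfold MhatN
    linarith
  -- bddAbove of both families
  have hbddU : BddAbove (Set.range fun q : Qset => MhatN γ π s0 n sa s' q.1 τ ω) := by
    refine ⟨(1 / (n * (1 - γ))) * (n * (B * (γ * V + V))) + V, ?_⟩
    rintro x ⟨q, rfl⟩
    exact hMb q.1 (hQ_bdd q.1 q.2)
  have hbddL : BddAbove (Set.range fun q : Qset =>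
      MhatN γ π s0 n sa s' (fun x => -(q.1 x)) τ ω) := by
    refine ⟨(1 / (n * (1 - γ))) * (n * (B * (γ * V + V))) + V, ?_⟩
    rintro x ⟨q, rfl⟩
    exact hMb _ (fun x => by simpa using hQ_bdd q.1 q.2 x)
  -- relation MhatN (-q) = - MhatN q
  have hnegI : ∀ s : S, actInt π (fun x => -(qpi x)) s = - actInt π qpi s := by
    intro s; simp [actInt, integral_neg]
  have hneg : MhatN γ π s0 n sa s' (fun x => -(qpi x)) τ ω
      = - MhatN γ π s0 n sa s' qpi τ ω := by
    unfold MhatN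
    simp only [hnegI]
    have hsum : ∑ i, τ (sa i ω) * (γ * -actInt π qpi (s' i ω) - -qpi (sa i ω))
        = -∑ i, τ (sa i ω) * (γ * actInt π qpi (s' i ω) - qpi (sa i ω)) := by
      rw [← Finset.sum_neg_distrib]
      exact Finset.sum_congr rfl fun i _ => by ring
    rw [hsum]; ring
  -- key identity
  have hid : actInt π qpi s0
      = (1 / (n * (1 - γ))) * (∑ i, rew i ω * τ (sa i ω))
        + LhatN γ π n sa rew s' qpi τ ω + MhatN γ π s0 n sa s' qpi τ ω := by
    unfold LhatN MhatN
    have h0 : ∑ i, (rew i ω * τ (sa i ω)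
        + τ (sa i ω) * (qpi (sa i ω) - rew i ω - γ * actInt π qpi (s' i ω))
        + τ (sa i ω) * (γ * actInt π qpi (s' i ω) - qpi (sa i ω))) = 0 :=
      Finset.sum_eq_zero fun i _ => by ring
    rw [Finset.sum_add_distrib, Finset.sum_add_distrib] at h0
    have := mul_eq_zero_of_right (1 / (n * (1 - γ))) h0
    nlinarith [this]
  have hsupU : MhatN γ π s0 n sa s' qpi τ ω
      ≤ ⨆ q : Qset, MhatN γ π s0 n sa s' q.1 τ ω :=
    le_ciSup hbddU ⟨qpi, hqpiQ⟩
  have hsupL : - MhatN γ π s0 n sa s' qpi τ ω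
      ≤ ⨆ q : Qset, MhatN γ π s0 n sa s' (fun x => -(q.1 x)) τ ω := by
    rw [← hneg]
    exact le_ciSup hbddL ⟨qpi, hqpiQ⟩
  have hU' := hU τ hτ
  have hL' := hL τ hτ
  constructor <;> linarith
end

section
/- Let H be a separable real Hilbert space, (F_i)_{i=0}^n a filtration on a probability space, and X_1,…,X_n Bochner-integrable H-valued random variables such that, for each i, X_i is F_i-measurable, E[X_i | F_{i−1}] = 0 almost surely, and ‖X_i‖ ≤ B almost surely for a constant B > 0. Then for any δ ∈ (0,1), with probability at least 1−δ: ‖(1/n)·Σ_{i=1}^n X_i‖ ≤ B·√(2 ln(2/δ)/n) + 2B·ln(2/δ)/(3n). (Hilbert-space martingale concentration underlying Theorem 4.1, via Pinelis' inequality.) -/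
/-!
Pinelis' argument. If `‖x‖ ≤ B`, then `‖s + x‖ ^ 2 ≤ ‖s‖ ^ 2 + 2 ⟪s, x⟫ + B ^ 2` and the
convexity of `t ↦ cosh (L √t)` give `cosh (L ‖s + x‖) ≤ cosh (L ‖s‖) cosh (L B) + ⟪w s, x⟫` for
an explicit multiple `w s` of `s`. Along the partial sums `S k` of the martingale differences,
`w (S k)` is known at time `k`, so the linear term has mean zero and
`E cosh (L ‖S n‖) ≤ cosh (L B) ^ n ≤ exp (n L² B² / 2)`. Markov's inequality with
`L = r / (n B²)` gives `P (r ≤ ‖S n‖) ≤ 2 exp (-r² / (2 n B²))`, which is at most `δ` for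
`r = n t` with `t` the radius in the statement.
-/

open MeasureTheory ProbabilityTheory Real
open scoped RealInnerProductSpace

namespace Real

theorem sinh_le_mul_cosh {x : ℝ} (hx : 0 ≤ x) : sinh x ≤ x * cosh x := by
  refine hasSum_le (fun k => ?_) (hasSum_sinh x) ((hasSum_cosh x).mul_left x)
  rw [← mul_div_assoc, ← pow_succ']
  gcongr
  exact Nat.le_succ _

theorem monotoneOn_sinh_div_self : MonotoneOn (fun x => sinh x / x) (Set.Ioi 0) := by
  refine monotoneOn_of_deriv_nonneg (convex_Ioi 0)
    (continuous_sinh.continuousOn.div continuousOn_id fun x hx => hx.ne') ?_ ?_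
  all_goals rw [interior_Ioi]; intro x hx
  · exact ((differentiable_sinh x).div differentiableAt_id hx.ne').differentiableWithinAt
  · have hderiv : HasDerivAt (fun x => sinh x / x) ((cosh x * x - sinh x * 1) / x ^ 2) x :=
      (hasDerivAt_sinh x).div (hasDerivAt_id x) hx.ne'
    rw [hderiv.deriv]
    have := sinh_le_mul_cosh (le_of_lt hx)
    exact div_nonneg (by linarith) (sq_nonneg x)

theorem hasDerivAt_cosh_mul_sqrt (L : ℝ) {t : ℝ} (ht : 0 < t) :
    HasDerivAt (fun t => cosh (L * √t)) (L ^ 2 / 2 * (sinh (L * √t) / (L * √t))) t := by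
  have hsqrt : √t ≠ 0 := (sqrt_pos.mpr ht).ne'
  convert ((hasDerivAt_sqrt ht.ne').const_mul L).cosh using 1
  field_simp

theorem convexOn_cosh_mul_sqrt {L : ℝ} (hL : 0 < L) :
    ConvexOn ℝ (Set.Ici 0) (fun t => cosh (L * √t)) := by
  refine MonotoneOn.convexOn_of_deriv (convex_Ici 0)
    (continuous_cosh.comp (continuous_const.mul continuous_sqrt)).continuousOn ?_ ?_
  all_goals rw [interior_Ici]
  · exact fun t ht => (hasDerivAt_cosh_mul_sqrt L ht).differentiableAt.differentiableWithinAt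
  · intro t₁ ht₁ t₂ ht₂ ht
    rw [(hasDerivAt_cosh_mul_sqrt L ht₁).deriv, (hasDerivAt_cosh_mul_sqrt L ht₂).deriv]
    have hpos : 0 < L * √t₁ := mul_pos hL (sqrt_pos.mpr ht₁)
    have hle : L * √t₁ ≤ L * √t₂ := by gcongr
    exact mul_le_mul_of_nonneg_left (monotoneOn_sinh_div_self hpos (hpos.trans_le hle) hle)
      (by positivity)

/-- Write `c ^ 2 + 2 * a + B ^ 2` as a convex combination of `(c - B) ^ 2` and `(c + B) ^ 2` and use
convexity of `t ↦ cosh (L * √t)`. -/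
theorem cosh_mul_sqrt_le {L B c a : ℝ} (hL : 0 < L) (hB : 0 < B) (hc : 0 < c)
    (ha : |a| ≤ c * B) :
    cosh (L * √(c ^ 2 + 2 * a + B ^ 2)) ≤
      cosh (L * c) * cosh (L * B) + a * (sinh (L * c) * sinh (L * B) / (c * B)) := by
  have hcB : 0 < c * B := mul_pos hc hB
  set p := a / (c * B)
  have hpa : p * (c * B) = a := div_mul_cancel₀ a hcB.ne'
  obtain ⟨hp₁, hp₂⟩ : -1 ≤ p ∧ p ≤ 1 := abs_le.mp <| by
    rwa [abs_div, abs_of_pos hcB, div_le_one hcB]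
  have hcosh : ∀ u, cosh (L * √(u ^ 2)) = cosh (L * u) := fun u => by
    rw [sqrt_sq_eq_abs, ← cosh_abs (L * u), abs_mul, abs_of_pos hL]
  have hconv := (convexOn_cosh_mul_sqrt hL).2 (sq_nonneg (c - B)) (sq_nonneg (c + B))
    (by linarith : 0 ≤ (1 - p) / 2) (by linarith : 0 ≤ (1 + p) / 2) (by ring)
  have hcomb : (1 - p) / 2 * (c - B) ^ 2 + (1 + p) / 2 * (c + B) ^ 2 = c ^ 2 + 2 * a + B ^ 2 := by
    linear_combination 2 * hpa
  simp only [smul_eq_mul, hcomb, hcosh, mul_sub, mul_add, cosh_sub, cosh_add] at hconv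
  exact hconv.trans_eq (by ring)

end Real

section Pinelis

variable {H : Type*} [NormedAddCommGroup H] [InnerProductSpace ℝ H]

/-- At `s = 0` the junk value of the division is harmless: it multiplies `s = 0`. -/
noncomputable def pinelisWeight (L B : ℝ) (s : H) : H :=
  (sinh (L * ‖s‖) * sinh (L * B) / (‖s‖ * B)) • s

theorem cosh_mul_norm_add_le {L B : ℝ} (hL : 0 < L) (hB : 0 < B) (s : H) {x : H}
    (hx : ‖x‖ ≤ B) :
    cosh (L * ‖s + x‖) ≤ cosh (L * ‖s‖) * cosh (L * B) + ⟪pinelisWeight L B s, x⟫ := by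
  rcases eq_or_ne s 0 with rfl | hs
  · simpa [pinelisWeight, cosh_le_cosh, abs_of_pos hL, abs_of_pos hB] using
      mul_le_mul_of_nonneg_left hx hL.le
  have hsx : ‖s + x‖ ^ 2 ≤ ‖s‖ ^ 2 + 2 * ⟪s, x⟫ + B ^ 2 := by
    rw [norm_add_sq_real]
    gcongr
  calc cosh (L * ‖s + x‖) = cosh (L * √(‖s + x‖ ^ 2)) := by rw [sqrt_sq (norm_nonneg _)]
    _ ≤ cosh (L * √(‖s‖ ^ 2 + 2 * ⟪s, x⟫ + B ^ 2)) := by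
      rw [cosh_le_cosh, abs_of_nonneg (by positivity), abs_of_nonneg (by positivity)]
      gcongr
    _ ≤ cosh (L * ‖s‖) * cosh (L * B) +
        ⟪s, x⟫ * (sinh (L * ‖s‖) * sinh (L * B) / (‖s‖ * B)) :=
      cosh_mul_sqrt_le hL hB (norm_pos_iff.mpr hs)
        ((abs_real_inner_le_norm s x).trans (by gcongr))
    _ = cosh (L * ‖s‖) * cosh (L * B) + ⟪pinelisWeight L B s, x⟫ := by
      rw [pinelisWeight, real_inner_smul_left, mul_comm (⟪s, x⟫)]

theorem norm_pinelisWeight {L B : ℝ} (hL : 0 ≤ L) (hB : 0 ≤ B) (s : H) :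
    ‖pinelisWeight L B s‖ = sinh (L * ‖s‖) * sinh (L * B) / B := by
  rcases eq_or_ne s 0 with rfl | hs
  · simp [pinelisWeight]
  have h₁ : 0 ≤ sinh (L * ‖s‖) := sinh_nonneg_iff.mpr (by positivity)
  have h₂ : 0 ≤ sinh (L * B) := sinh_nonneg_iff.mpr (by positivity)
  rw [pinelisWeight, norm_smul, norm_of_nonneg (by positivity)]
  field_simp [norm_ne_zero_iff.mpr hs]

end Pinelis

section Bounds

open Finset

variable {E : Type*} [NormedAddCommGroup E] {Ω : Type*} {m0 : MeasurableSpace Ω} {μ : Measure Ω}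
  {ℱ : ℕ → MeasurableSpace Ω} {Y : ℕ → Ω → E} {B : ℝ}

theorem integrable_cosh_mul_norm [IsFiniteMeasure μ] {S : Ω → E} (hS : AEStronglyMeasurable S μ)
    {C : ℝ} (hSC : ∀ᵐ ω ∂μ, ‖S ω‖ ≤ C) (L : ℝ) :
    Integrable (fun ω => cosh (L * ‖S ω‖)) μ := by
  refine .of_bound ((continuous_cosh.comp (continuous_const.mul continuous_norm))
    |>.comp_aestronglyMeasurable hS) (cosh (L * C)) (hSC.mono fun ω hω => ?_)
  rw [norm_of_nonneg (cosh_pos _).le, cosh_le_cosh, abs_mul, abs_mul, abs_norm]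
  exact mul_le_mul_of_nonneg_left (hω.trans (le_abs_self C)) (abs_nonneg L)

theorem stronglyMeasurable_sum_range (hmono : Monotone ℱ)
    (hYm : ∀ i, StronglyMeasurable[ℱ (i + 1)] (Y i)) (k : ℕ) :
    StronglyMeasurable[ℱ k] (fun ω => ∑ i ∈ range k, Y i ω) :=
  Finset.stronglyMeasurable_fun_sum _ fun i hi => (hYm i).mono (hmono (mem_range.mp hi))

theorem ae_norm_sum_range_le (hYB : ∀ i, ∀ᵐ ω ∂μ, ‖Y i ω‖ ≤ B) (k : ℕ) :
    ∀ᵐ ω ∂μ, ‖∑ i ∈ range k, Y i ω‖ ≤ k * B := by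
  filter_upwards [ae_all_iff.mpr hYB] with ω hω
  simpa using norm_sum_le_of_le (range k) fun i _ => hω i

end Bounds

section Martingale

open Finset

variable {H : Type*} [NormedAddCommGroup H] [InnerProductSpace ℝ H] [CompleteSpace H]
  {Ω : Type*} {m0 : MeasurableSpace Ω} {μ : Measure Ω} {ℱ : ℕ → MeasurableSpace Ω}
  {Y : ℕ → Ω → H} {B : ℝ}

theorem integral_inner_eq_zero_of_condExp_eq_zero {m : MeasurableSpace Ω} (hm : m ≤ m0)
    [SigmaFinite (μ.trim hm)] {W X : Ω → H} (hW : StronglyMeasurable[m] W)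
    (hWX : Integrable (fun ω => ⟪W ω, X ω⟫) μ) (hX : Integrable X μ) (hX0 : μ[X|m] =ᵐ[μ] 0) :
    ∫ ω, ⟪W ω, X ω⟫ ∂μ = 0 := by
  have hpull : μ[fun ω => ⟪W ω, X ω⟫|m] =ᵐ[μ] fun ω => ⟪W ω, μ[X|m] ω⟫ :=
    condExp_bilin_of_stronglyMeasurable_left (innerSL ℝ) hW hWX hX
  rw [← integral_condExp hm, integral_congr_ae hpull]
  refine integral_eq_zero_of_ae (hX0.mono fun ω hω => ?_)
  simp [hω]

theorem integral_cosh_mul_norm_add_le [IsFiniteMeasure μ] {L B C : ℝ} (hL : 0 < L) (hB : 0 < B)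
    {m : MeasurableSpace Ω} (hm : m ≤ m0) {S X : Ω → H} (hS : StronglyMeasurable[m] S)
    (hSC : ∀ᵐ ω ∂μ, ‖S ω‖ ≤ C) (hX : AEStronglyMeasurable[m0] X μ) (hXB : ∀ᵐ ω ∂μ, ‖X ω‖ ≤ B)
    (hX0 : μ[X|m] =ᵐ[μ] 0) :
    ∫ ω, cosh (L * ‖S ω + X ω‖) ∂μ ≤ cosh (L * B) * ∫ ω, cosh (L * ‖S ω‖) ∂μ := by
  have : IsFiniteMeasure (μ.trim hm) := isFiniteMeasure_trim hm
  have hS' : AEStronglyMeasurable[m0] S μ := (hS.mono hm).aestronglyMeasurable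
  have hW : StronglyMeasurable[m] (fun ω => pinelisWeight L B (S ω)) := by
    have hnorm := hS.norm.measurable
    exact (((continuous_sinh.measurable.comp (hnorm.const_mul L)).mul_const _).div
      (hnorm.mul_const B)).stronglyMeasurable.smul hS
  have hWX : Integrable (fun ω => ⟪pinelisWeight L B (S ω), X ω⟫) μ := by
    refine .of_bound ((hW.mono hm).aestronglyMeasurable.inner hX)
      (sinh (L * C) * sinh (L * B) / B * B) ?_
    filter_upwards [hSC, hXB] with ω hSω hXω
    calc ‖⟪pinelisWeight L B (S ω), X ω⟫‖ ≤ ‖pinelisWeight L B (S ω)‖ * ‖X ω‖ :=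
          norm_inner_le_norm _ _
      _ ≤ ‖pinelisWeight L B (S ω)‖ * B := by gcongr
      _ ≤ sinh (L * C) * sinh (L * B) / B * B := by
        rw [norm_pinelisWeight hL.le hB.le]
        gcongr
        exact sinh_le_sinh.mpr (by gcongr)
  have hSX : Integrable (fun ω => cosh (L * ‖S ω + X ω‖)) μ :=
    integrable_cosh_mul_norm (hS'.add hX) (C := C + B)
      (by filter_upwards [hSC, hXB] with ω h₁ h₂ using (norm_add_le _ _).trans (add_le_add h₁ h₂)) L
  have hcoshS := (integrable_cosh_mul_norm hS' hSC L).mul_const (cosh (L * B))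
  calc ∫ ω, cosh (L * ‖S ω + X ω‖) ∂μ
      ≤ ∫ ω, (cosh (L * ‖S ω‖) * cosh (L * B) + ⟪pinelisWeight L B (S ω), X ω⟫) ∂μ :=
        integral_mono_ae hSX (hcoshS.add hWX)
          (hXB.mono fun ω hω => cosh_mul_norm_add_le hL hB (S ω) hω)
    _ = cosh (L * B) * ∫ ω, cosh (L * ‖S ω‖) ∂μ := by
      rw [integral_add hcoshS hWX, integral_inner_eq_zero_of_condExp_eq_zero hm hW hWX
        (.of_bound hX B hXB) hX0, add_zero, integral_mul_const, mul_comm]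

variable [IsProbabilityMeasure μ]

theorem integral_cosh_mul_norm_sum_range_le {L : ℝ} (hL : 0 < L) (hB : 0 < B)
    (hmono : Monotone ℱ) (hle : ∀ i, ℱ i ≤ m0) (hYm : ∀ i, StronglyMeasurable[ℱ (i + 1)] (Y i))
    (hYB : ∀ i, ∀ᵐ ω ∂μ, ‖Y i ω‖ ≤ B) (hY0 : ∀ i, μ[Y i|ℱ i] =ᵐ[μ] 0) (k : ℕ) :
    ∫ ω, cosh (L * ‖∑ i ∈ range k, Y i ω‖) ∂μ ≤ cosh (L * B) ^ k := by
  induction k with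
  | zero => simp
  | succ k ih =>
    simp_rw [sum_range_succ]
    calc ∫ ω, cosh (L * ‖∑ i ∈ range k, Y i ω + Y k ω‖) ∂μ
        ≤ cosh (L * B) * ∫ ω, cosh (L * ‖∑ i ∈ range k, Y i ω‖) ∂μ :=
          integral_cosh_mul_norm_add_le hL hB (hle k) (stronglyMeasurable_sum_range hmono hYm k)
            (ae_norm_sum_range_le hYB k) ((hYm k).mono (hle _)).aestronglyMeasurable (hYB k)
            (hY0 k)
      _ ≤ cosh (L * B) * cosh (L * B) ^ k := by gcongr
      _ = cosh (L * B) ^ (k + 1) := (pow_succ' _ _).symm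

theorem measureReal_le_norm_sum_range_le (hB : 0 < B) (hmono : Monotone ℱ) (hle : ∀ i, ℱ i ≤ m0)
    (hYm : ∀ i, StronglyMeasurable[ℱ (i + 1)] (Y i)) (hYB : ∀ i, ∀ᵐ ω ∂μ, ‖Y i ω‖ ≤ B)
    (hY0 : ∀ i, μ[Y i|ℱ i] =ᵐ[μ] 0) {n : ℕ} (hn : 0 < n) {r : ℝ} (hr : 0 < r) :
    μ.real {ω | r ≤ ‖∑ i ∈ range n, Y i ω‖} ≤ 2 * exp (-r ^ 2 / (2 * n * B ^ 2)) := by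
  set S := fun ω => ∑ i ∈ range n, Y i ω
  set L := r / (n * B ^ 2)
  have hL : 0 < L := by positivity
  have hmarkov := mul_meas_ge_le_integral_of_nonneg (ae_of_all μ fun ω => (cosh_pos _).le)
    (integrable_cosh_mul_norm
      ((stronglyMeasurable_sum_range hmono hYm n).mono (hle n)).aestronglyMeasurable
      (ae_norm_sum_range_le hYB n) L) (cosh (L * r))
  have hmoment := integral_cosh_mul_norm_sum_range_le hL hB hmono hle hYm hYB hY0 n
  have hsub : {ω | r ≤ ‖S ω‖} ⊆ {ω | cosh (L * r) ≤ cosh (L * ‖S ω‖)} := fun ω hω => by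
    show cosh (L * r) ≤ cosh (L * ‖S ω‖)
    rw [cosh_le_cosh, abs_of_pos (by positivity), abs_of_nonneg (by positivity)]
    exact mul_le_mul_of_nonneg_left hω hL.le
  have hexp : exp (L * r) / 2 ≤ cosh (L * r) := by
    rw [cosh_eq]
    linarith [exp_pos (-(L * r))]
  have hexponent : n * ((L * B) ^ 2 / 2) - L * r = -r ^ 2 / (2 * n * B ^ 2) := by
    simp only [L]
    field_simp
    ring
  calc μ.real {ω | r ≤ ‖S ω‖} ≤ μ.real {ω | cosh (L * r) ≤ cosh (L * ‖S ω‖)} :=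
        measureReal_mono hsub
    _ ≤ cosh (L * B) ^ n / cosh (L * r) := by
      rw [le_div_iff₀ (cosh_pos _)]
      linarith
    _ ≤ exp ((L * B) ^ 2 / 2) ^ n / (exp (L * r) / 2) :=
      div_le_div₀ (by positivity) (pow_le_pow_left₀ (cosh_pos _).le (cosh_le_exp_half_sq _) n)
        (by positivity) hexp
    _ = 2 * exp (-r ^ 2 / (2 * n * B ^ 2)) := by
      rw [← exp_nat_mul, ← hexponent, exp_sub]
      field_simp

theorem measureReal_le_norm_sum_le (hmono : Monotone ℱ) (hle : ∀ i, ℱ i ≤ m0) {n : ℕ} (hn : 0 < n)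
    {X : Fin n → Ω → H} (hXm : ∀ i : Fin n, StronglyMeasurable[ℱ (i + 1)] (X i))
    (hX0 : ∀ i : Fin n, μ[X i|ℱ i] =ᵐ[μ] 0) (hB : 0 < B)
    (hXB : ∀ i : Fin n, ∀ᵐ ω ∂μ, ‖X i ω‖ ≤ B) {r : ℝ} (hr : 0 < r) :
    μ.real {ω | r ≤ ‖∑ i, X i ω‖} ≤ 2 * exp (-r ^ 2 / (2 * n * B ^ 2)) := by
  set Y : ℕ → Ω → H := fun i => if h : i < n then X ⟨i, h⟩ else 0
  have hsum : ∀ ω, ∑ i, X i ω = ∑ i ∈ Finset.range n, Y i ω := fun ω => by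
    rw [← Fin.sum_univ_eq_sum_range]
    simp [Y]
  simp_rw [hsum]
  refine measureReal_le_norm_sum_range_le hB hmono hle (fun i => ?_) (fun i => ?_) (fun i => ?_)
    hn hr
  all_goals dsimp only [Y]; split_ifs with h
  · exact hXm ⟨i, h⟩
  · exact stronglyMeasurable_const
  · exact hXB ⟨i, h⟩
  · exact ae_of_all _ fun _ => by simpa using hB.le
  · exact hX0 ⟨i, h⟩
  · rw [condExp_zero]

end Martingale

theorem ofReal_one_sub_le_measure {Ω : Type*} {m0 : MeasurableSpace Ω} {μ : Measure Ω}
    [IsProbabilityMeasure μ] {s : Set Ω} {δ : ℝ} (hδ : 0 ≤ δ) (hs : μ sᶜ ≤ ENNReal.ofReal δ) :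
    ENNReal.ofReal (1 - δ) ≤ μ s := by
  have hcover : 1 ≤ μ s + μ sᶜ := by
    rw [← measure_univ (μ := μ), ← Set.union_compl_self s]
    exact measure_union_le _ _
  calc ENNReal.ofReal (1 - δ) = 1 - ENNReal.ofReal δ := by
        rw [ENNReal.ofReal_sub _ hδ, ENNReal.ofReal_one]
    _ ≤ 1 - μ sᶜ := tsub_le_tsub_left hs 1
    _ ≤ μ s := tsub_le_iff_right.mpr hcover

theorem exp_neg_sq_div_le {n B Λ t : ℝ} (hn : 0 < n) (hB : 0 < B) (hΛ : 0 ≤ Λ)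
    (ht : B * √(2 * Λ / n) ≤ t) :
    exp (-(n * t) ^ 2 / (2 * n * B ^ 2)) ≤ exp (-Λ) := by
  rw [exp_le_exp, neg_div, neg_le_neg_iff, le_div_iff₀ (by positivity)]
  calc Λ * (2 * n * B ^ 2) = (n * (B * √(2 * Λ / n))) ^ 2 := by
        rw [mul_pow, mul_pow, sq_sqrt (by positivity)]
        field_simp
    _ ≤ (n * t) ^ 2 := by gcongr

theorem stmt_10_general
    {H : Type*} [NormedAddCommGroup H] [InnerProductSpace ℝ H] [CompleteSpace H]
    {Ω₀ : Type*} [m : MeasurableSpace Ω₀]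
    (Pr : Measure Ω₀) [IsProbabilityMeasure Pr]
    (n : ℕ) (hn : 0 < n)
    (ℱ : ℕ → MeasurableSpace Ω₀) (hmono : Monotone ℱ) (hle : ∀ i, ℱ i ≤ m)
    (X : Fin n → Ω₀ → H)
    (hmeas : ∀ i : Fin n, StronglyMeasurable[ℱ ((i : ℕ) + 1)] (X i))
    (hmds : ∀ i : Fin n, (Pr[X i|ℱ (i : ℕ)]) =ᵐ[Pr] 0)
    (B : ℝ) (hB : 0 < B)
    (hbdd : ∀ i : Fin n, ∀ᵐ ω ∂Pr, ‖X i ω‖ ≤ B)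
    (δ : ℝ) (hδ : δ ∈ Set.Ioo (0 : ℝ) 1) :
    ENNReal.ofReal (1 - δ) ≤
      Pr {ω | ‖(1 / n : ℝ) • ∑ i, X i ω‖ ≤
        B * Real.sqrt (2 * Real.log (2 / δ) / n)
          + 2 * B * Real.log (2 / δ) / (3 * n)} := by
  obtain ⟨hδ₀, hδ₁⟩ := hδ
  have hn' : (0 : ℝ) < n := Nat.cast_pos.mpr hn
  set Λ := log (2 / δ)
  have hΛ : 0 < Λ := log_pos (by rw [lt_div_iff₀ hδ₀]; linarith)
  set t := B * √(2 * Λ / n) + 2 * B * Λ / (3 * n)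
  refine ofReal_one_sub_le_measure hδ₀.le ?_
  have hsub : {ω | ‖(1 / n : ℝ) • ∑ i, X i ω‖ ≤ t}ᶜ ⊆ {ω | n * t ≤ ‖∑ i, X i ω‖} := fun ω hω => by
    have : t < ‖∑ i, X i ω‖ / n := by simpa [norm_smul, abs_of_pos hn', div_eq_inv_mul] using hω
    show n * t ≤ ‖∑ i, X i ω‖
    rw [lt_div_iff₀ hn'] at this
    linarith
  have hδbound : 2 * exp (-(n * t) ^ 2 / (2 * n * B ^ 2)) ≤ δ := by
    calc 2 * exp (-(n * t) ^ 2 / (2 * n * B ^ 2)) ≤ 2 * exp (-Λ) :=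
          mul_le_mul_of_nonneg_left (exp_neg_sq_div_le hn' hB hΛ.le
            (le_add_of_nonneg_right (by positivity : 0 ≤ 2 * B * Λ / (3 * n)))) zero_le_two
      _ = δ := by
          rw [exp_neg, exp_log (by positivity)]
          field_simp
  rw [ENNReal.le_ofReal_iff_toReal_le (measure_ne_top _ _) hδ₀.le]
  exact (measureReal_mono hsub).trans <|
    (measureReal_le_norm_sum_le hmono hle hn hmeas hmds hB hbdd (by positivity)).trans hδbound

/-- Hilbert-space martingale concentration, Pinelis-type,
underlying Theorem 4.1. -/
theorem stmt_10
    {H : Type*} [NormedAddCommGroup H] [InnerProductSpace ℝ H] [CompleteSpace H]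
    [SecondCountableTopology H] [MeasurableSpace H] [BorelSpace H]
    {Ω₀ : Type*} [m : MeasurableSpace Ω₀]
    (Pr : Measure Ω₀) [IsProbabilityMeasure Pr]
    (n : ℕ) (hn : 0 < n)
    (ℱ : ℕ → MeasurableSpace Ω₀) (hmono : Monotone ℱ) (hle : ∀ i, ℱ i ≤ m)
    (X : Fin n → Ω₀ → H)
    (hint : ∀ i, Integrable (X i) Pr)
    (hmeas : ∀ i : Fin n, StronglyMeasurable[ℱ ((i : ℕ) + 1)] (X i))
    (hmds : ∀ i : Fin n, (Pr[X i|ℱ (i : ℕ)]) =ᵐ[Pr] 0)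
    (B : ℝ) (hB : 0 < B)
    (hbdd : ∀ i : Fin n, ∀ᵐ ω ∂Pr, ‖X i ω‖ ≤ B)
    (δ : ℝ) (hδ : δ ∈ Set.Ioo (0 : ℝ) 1) :
    ENNReal.ofReal (1 - δ) ≤
      Pr {ω | ‖(1 / n : ℝ) • ∑ i, X i ω‖ ≤
        B * Real.sqrt (2 * Real.log (2 / δ) / n)
          + 2 * B * Real.log (2 / δ) / (3 * n)} :=
  stmt_10_general (m := m) Pr n hn ℱ hmono hle X hmeas hmds B hB hbdd δ hδ
end

section
/- Let G : ℝ → ℝ be differentiable and M-strongly convex for some M > 0 (so that its derivative G' is continuous, strictly increasing, and a bijection from ℝ onto ℝ), and let λ > 0 and c ∈ ℝ. Then the function t ↦ t·c − λ·G(t) attains its maximum over [0,∞) at a unique point, and this unique maximizer equals max(0, (G')⁻¹(c/λ)), where (G')⁻¹ denotes the inverse function of G'. (Proposition 4.1, closed-form global optimizer.) -/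
/-!
Strong convexity makes `x ↦ G' x - M x` monotone, so `G'` is strictly increasing and grows at
least linearly in both directions; with the Darboux property of derivatives this makes `G'` a
bijection of `ℝ`. Hence the derivative `c - λ G'` of the objective is strictly decreasing and
vanishes exactly at `z = (G')⁻¹ (c / λ)`: the objective increases up to `z` and decreases after it,
and its unique maximizer over `[0, ∞)` is `max 0 z`.
-/

open Set Filter Function

section StrongConvexity

variable {G : ℝ → ℝ} {M : ℝ}

theorem monotone_deriv_sub_mul (hdiff : Differentiable ℝ G)
    (hconv : ConvexOn ℝ univ (fun x => G x - M / 2 * x ^ 2)) :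
    Monotone (fun x => deriv G x - M * x) := by
  have hsq : ∀ x : ℝ, HasDerivAt (fun x : ℝ => M / 2 * x ^ 2) (M * x) x := fun x =>
    ((hasDerivAt_pow 2 x).const_mul (M / 2)).congr_deriv (by push_cast; ring)
  have hderiv : ∀ x, HasDerivAt (fun x => G x - M / 2 * x ^ 2) (deriv G x - M * x) x :=
    fun x => (hdiff x).hasDerivAt.sub (hsq x)
  intro x y hxy
  simpa only [(hderiv _).deriv] using
    hconv.monotoneOn_deriv (fun x _ => (hderiv x).differentiableAt) (mem_univ x) (mem_univ y) hxy

theorem mul_sub_le_deriv_sub_deriv (hmono : Monotone (fun x => deriv G x - M * x)) {x y : ℝ}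
    (hxy : x ≤ y) : M * (y - x) ≤ deriv G y - deriv G x := by
  have := hmono hxy
  simp only at this
  linarith

theorem strictMono_deriv (hmono : Monotone (fun x => deriv G x - M * x)) (hM : 0 < M) :
    StrictMono (deriv G) := fun x y hxy => by
  nlinarith [mul_sub_le_deriv_sub_deriv hmono hxy.le, mul_pos hM (sub_pos.mpr hxy)]

theorem surjective_deriv (hmono : Monotone (fun x => deriv G x - M * x)) (hM : 0 < M)
    (hdiff : Differentiable ℝ G) : Surjective (deriv G) := by
  intro y
  have hlin : Tendsto (fun x => deriv G 0 + M * x) atTop atTop :=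
    tendsto_atTop_add_const_left _ _ (tendsto_id.const_mul_atTop hM)
  have hlin' : Tendsto (fun x => deriv G 0 + M * x) atBot atBot :=
    tendsto_atBot_add_const_left _ _ (tendsto_id.const_mul_atBot hM)
  have htop : Tendsto (deriv G) atTop atTop :=
    tendsto_atTop_mono' _ ((eventually_ge_atTop 0).mono fun x hx => by
      linarith [mul_sub_le_deriv_sub_deriv hmono hx]) hlin
  have hbot : Tendsto (deriv G) atBot atBot :=
    tendsto_atBot_mono' _ ((eventually_le_atBot 0).mono fun x hx => by
      linarith [mul_sub_le_deriv_sub_deriv hmono hx]) hlin'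
  obtain ⟨a, ha⟩ := (hbot.eventually_lt_atBot y).exists
  obtain ⟨b, hb⟩ := (htop.eventually_gt_atTop y).exists
  have hab : a ≤ b := ((strictMono_deriv hmono hM).lt_iff_lt.mp (ha.trans hb)).le
  obtain ⟨x, -, hx⟩ := exists_hasDerivWithinAt_eq_of_gt_of_lt hab
    (fun x _ => (hdiff x).hasDerivAt.hasDerivWithinAt) ha hb
  exact ⟨x, hx⟩

end StrongConvexity

section Unimodal

variable {f : ℝ → ℝ} {z : ℝ}

theorem strictMonoOn_Iic_of_strictAnti_deriv (hf : Differentiable ℝ f)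
    (hf' : StrictAnti (deriv f)) (hz : deriv f z = 0) : StrictMonoOn f (Iic z) :=
  strictMonoOn_of_deriv_pos (convex_Iic z) hf.continuous.continuousOn fun x hx => by
    rw [interior_Iic] at hx
    exact hz ▸ hf' hx

theorem strictAntiOn_Ici_of_strictAnti_deriv (hf : Differentiable ℝ f)
    (hf' : StrictAnti (deriv f)) (hz : deriv f z = 0) : StrictAntiOn f (Ici z) :=
  strictAntiOn_of_deriv_neg (convex_Ici z) hf.continuous.continuousOn fun x hx => by
    rw [interior_Ici] at hx
    exact hz ▸ hf' hx

theorem lt_apply_max_of_strictMonoOn_of_strictAntiOn (hinc : StrictMonoOn f (Iic z))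
    (hdec : StrictAntiOn f (Ici z)) {a t : ℝ} (ht : a ≤ t) (hne : t ≠ max a z) :
    f t < f (max a z) := by
  rcases hne.lt_or_gt with hlt | hgt
  · have htz : t < z := by
      by_contra! hzt
      exact hlt.not_ge (max_le ht hzt)
    rw [max_eq_right (ht.trans htz.le)]
    exact hinc htz.le (mem_Iic.mpr le_rfl) htz
  · exact hdec (le_max_right a z) ((le_max_right a z).trans hgt.le) hgt

theorem isMaxOn_Ici_max_and_unique (hinc : StrictMonoOn f (Iic z))
    (hdec : StrictAntiOn f (Ici z)) (a : ℝ) :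
    IsMaxOn f (Ici a) (max a z) ∧ ∀ t ∈ Ici a, IsMaxOn f (Ici a) t → t = max a z := by
  have hlt : ∀ t ∈ Ici a, t ≠ max a z → f t < f (max a z) := fun _ ht =>
    lt_apply_max_of_strictMonoOn_of_strictAntiOn hinc hdec ht
  refine ⟨fun t ht => ?_, fun t ht hmax => ?_⟩
  · rcases eq_or_ne t (max a z) with rfl | hne
    · exact le_refl (f (max a z))
    · exact (hlt t ht hne).le
  · by_contra hne
    exact (hlt t ht hne).not_ge (hmax (le_max_left a z))

end Unimodal

/-- Proposition 4.1, closed-form global optimizer. -/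
theorem stmt_11
    (G : ℝ → ℝ) (M : ℝ) (hM : 0 < M)
    (hdiff : Differentiable ℝ G)
    (hconv : ConvexOn ℝ Set.univ (fun x => G x - M / 2 * x ^ 2))
    (lam c : ℝ) (hlam : 0 < lam) :
    IsMaxOn (fun t => t * c - lam * G t) (Set.Ici 0)
        (max 0 (Function.invFun (deriv G) (c / lam)))
      ∧ ∀ t ∈ Set.Ici (0 : ℝ),
          IsMaxOn (fun t => t * c - lam * G t) (Set.Ici 0) t →
          t = max 0 (Function.invFun (deriv G) (c / lam)) := by
  have hmono := monotone_deriv_sub_mul hdiff hconv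
  set z := invFun (deriv G) (c / lam)
  have hz : deriv G z = c / lam := invFun_eq (surjective_deriv hmono hM hdiff _)
  have hf : ∀ t, HasDerivAt (fun t => t * c - lam * G t) (c - lam * deriv G t) t := fun t =>
    (hasDerivAt_mul_const c).sub ((hdiff t).hasDerivAt.const_mul lam)
  have hfdiff : Differentiable ℝ (fun t => t * c - lam * G t) := fun t => (hf t).differentiableAt
  have hanti : StrictAnti (deriv fun t => t * c - lam * G t) := fun x y hxy => by
    simp only [(hf _).deriv]
    nlinarith [strictMono_deriv hmono hM hxy]
  have hcrit : deriv (fun t => t * c - lam * G t) z = 0 := by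
    rw [(hf z).deriv, hz, mul_div_cancel₀ c hlam.ne', sub_self]
  exact isMaxOn_Ici_max_and_unique (strictMonoOn_Iic_of_strictAnti_deriv hfdiff hanti hcrit)
    (strictAntiOn_Ici_of_strictAnti_deriv hfdiff hanti hcrit) 0
end

section
/- Let G be a discriminator function with strong-convexity constant M > 0 and let λ > 0. Then the map c ↦ max(0, (G')⁻¹(c/λ)) is Lipschitz on ℝ with Lipschitz constant 1/(λM). Consequently, the function g_λ(c) := sup_{t ≥ 0}(t·c − λ·G(t)) is differentiable on ℝ with derivative g_λ'(c) = max(0, (G')⁻¹(c/λ)), and g_λ' is (1/(λM))-Lipschitz; in particular g_λ is (1/(λM))-smooth. (Curvature/smoothness of the discriminator's conjugate, exploited in breaking the bias–uncertainty tradeoff.) -/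
/-!
Strong convexity makes `G'` strongly monotone: `M (y - x) ≤ G' y - G' x` for `x ≤ y`. By Darboux's
theorem `G'` is then onto, and its inverse is `1/M`-Lipschitz, so `t⋆ c = max 0 ((G')⁻¹ (c/λ))`
is `1/(λM)`-Lipschitz. The tangent-line inequality for the convex `G` shows that `t⋆ c` attains the
supremum defining `g c`; hence `g c + t⋆ c (c' - c) ≤ g c'` for all `c, c'`, and a function with a
continuous field of such subgradients is differentiable with that derivative.
-/

open Set Function Filter Topology Asymptotics

theorem mul_sub_le_deriv_sub_deriv_of_convexOn_sub_sq {f : ℝ → ℝ} {M : ℝ}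
    (hf : Differentiable ℝ f) (hconv : ConvexOn ℝ univ (fun x => f x - M / 2 * x ^ 2))
    {x y : ℝ} (hxy : x ≤ y) : M * (y - x) ≤ deriv f y - deriv f x := by
  have hderiv : ∀ z, HasDerivAt (fun x => f x - M / 2 * x ^ 2) (deriv f z - M * z) z := by
    intro z
    refine ((hf z).hasDerivAt.sub ((hasDerivAt_pow 2 z).const_mul (M / 2))).congr_deriv ?_
    push_cast
    ring
  have := hconv.monotoneOn_deriv (fun z _ => (hderiv z).differentiableAt)
    (mem_univ x) (mem_univ y) hxy
  rw [(hderiv x).deriv, (hderiv y).deriv] at this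
  linarith

theorem ConvexOn.add_deriv_mul_sub_le {f : ℝ → ℝ} {S : Set ℝ} {x y : ℝ}
    (hf : ConvexOn ℝ S f) (hx : x ∈ S) (hy : y ∈ S) (hd : DifferentiableAt ℝ f x) :
    f x + deriv f x * (y - x) ≤ f y := by
  rcases lt_trichotomy x y with hxy | rfl | hxy
  · have := hf.deriv_le_slope hx hy hxy hd
    rw [slope_def_field, le_div_iff₀ (sub_pos.2 hxy)] at this
    linarith
  · simp
  · have := hf.slope_le_deriv hy hx hxy hd
    rw [slope_def_field, div_le_iff₀ (sub_pos.2 hxy)] at this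
    linarith

section StronglyMonotone

variable {f f' : ℝ → ℝ} {M : ℝ} (hM : 0 < M)
  (hmono : ∀ x y, x ≤ y → M * (y - x) ≤ f' y - f' x)
include hM hmono

theorem surjective_of_hasDerivAt_of_mul_sub_le (hf : ∀ x, HasDerivAt f (f' x) x) :
    Surjective f' := by
  intro v
  obtain ⟨r, hr⟩ : ∃ r, M * r = |v - f' 0| + M := ⟨(|v - f' 0| + M) / M, by field_simp⟩
  have hr0 : 0 ≤ r := nonneg_of_mul_nonneg_right (hr ▸ by positivity) hM
  have hlow : f' (-r) < v := by
    have := hmono (-r) 0 (by linarith)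
    nlinarith [neg_abs_le (v - f' 0)]
  have hhigh : v < f' r := by
    have := hmono 0 r hr0
    nlinarith [le_abs_self (v - f' 0)]
  obtain ⟨x, -, hx⟩ := exists_hasDerivWithinAt_eq_of_gt_of_lt (by linarith : -r ≤ r)
    (fun x _ => (hf x).hasDerivWithinAt) hlow hhigh
  exact ⟨x, hx⟩

theorem antilipschitzWith_of_mul_sub_le : AntilipschitzWith M⁻¹.toNNReal f' := by
  refine AntilipschitzWith.of_le_mul_dist fun x y => ?_
  rw [Real.coe_toNNReal _ (inv_nonneg.2 hM.le), Real.dist_eq, Real.dist_eq,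
    ← div_eq_inv_mul, le_div_iff₀ hM]
  rcases le_total x y with hxy | hxy
  · have := hmono x y hxy
    rw [abs_of_nonpos (sub_nonpos.2 hxy), abs_of_nonpos (by nlinarith)]
    linarith
  · have := hmono y x hxy
    rw [abs_of_nonneg (sub_nonneg.2 hxy), abs_of_nonneg (by nlinarith)]
    linarith

theorem lipschitzWith_max_zero_invFun_div (hsurj : Surjective f') {lam : ℝ} (hlam : 0 < lam) :
    LipschitzWith (1 / (lam * M)).toNNReal fun c => max 0 (invFun f' (c / lam)) := by
  have hcomp := (((antilipschitzWith_of_mul_sub_le hM hmono).to_rightInverse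
    (rightInverse_invFun hsurj)).const_max 0).comp (lipschitzWith_smul lam⁻¹)
  have hfun : (fun c => max 0 (invFun f' (c / lam))) =
      (fun y => max 0 (invFun f' y)) ∘ fun c => lam⁻¹ • c := by
    ext c
    simp [div_eq_inv_mul]
  rwa [hfun, one_div, mul_inv, mul_comm lam⁻¹, Real.toNNReal_mul (inv_nonneg.2 hM.le),
    Real.toNNReal_eq_nnnorm_of_nonneg (inv_nonneg.2 hlam.le)]

end StronglyMonotone

theorem hasDerivAt_of_forall_add_mul_sub_le {f s : ℝ → ℝ} {x : ℝ}
    (hsub : ∀ y z, f y + s y * (z - y) ≤ f z) (hs : ContinuousAt s x) :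
    HasDerivAt f (s x) x := by
  rw [hasDerivAt_iff_isLittleO]
  have hbound :
      (fun y => f y - f x - (y - x) • s x) =O[𝓝 x] (fun y => (s y - s x) * (y - x)) := by
    refine IsBigO.of_bound 1 (Eventually.of_forall fun y => ?_)
    have h₁ := hsub x y
    have h₂ := hsub y x
    rw [one_mul, Real.norm_eq_abs, Real.norm_eq_abs, smul_eq_mul, abs_le]
    constructor <;> nlinarith [le_abs_self ((s y - s x) * (y - x))]
  have hsmall : (fun y => s y - s x) =o[𝓝 x] (fun _ => (1 : ℝ)) :=
    (isLittleO_one_iff ℝ).2 (tendsto_sub_nhds_zero_iff.2 hs)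
  simpa using hbound.trans_isLittleO (hsmall.mul_isBigO (isBigO_refl (fun y => y - x) _))

theorem isMaxOn_mul_sub_mul_max_zero_invFun_deriv {G : ℝ → ℝ} (hconv : ConvexOn ℝ univ G)
    (hdiff : Differentiable ℝ G) (hsurj : Surjective (deriv G)) {lam : ℝ} (hlam : 0 < lam)
    (c : ℝ) :
    IsMaxOn (fun t => t * c - lam * G t) (Ici 0) (max 0 (invFun (deriv G) (c / lam))) := by
  set ψ := invFun (deriv G)
  set s := max 0 (ψ (c / lam))
  intro t (ht : 0 ≤ t)
  have htangent := hconv.add_deriv_mul_sub_le (mem_univ s) (mem_univ t) (hdiff s)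
  have hopt : (t - s) * (c - lam * deriv G s) ≤ 0 := by
    rcases le_total 0 (ψ (c / lam)) with hψ | hψ
    · have hs : s = ψ (c / lam) := max_eq_right hψ
      rw [hs, rightInverse_invFun hsurj, mul_div_cancel₀ c hlam.ne', sub_self, mul_zero]
    · have hs : s = 0 := max_eq_left hψ
      have h0 : c / lam ≤ deriv G 0 := by
        simpa [ψ, rightInverse_invFun hsurj (c / lam)] using
          hconv.monotoneOn_deriv (fun x _ => hdiff x) (mem_univ _) (mem_univ 0) hψ
      rw [div_le_iff₀ hlam, mul_comm] at h0
      rw [hs]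
      exact mul_nonpos_of_nonneg_of_nonpos (by linarith) (by linarith)
  show t * c - lam * G t ≤ s * c - lam * G s
  nlinarith

theorem stmt_14_general
    (G : ℝ → ℝ) (M : ℝ) (hM : 0 < M)
    (hdiff : Differentiable ℝ G)
    (hconv : ConvexOn ℝ Set.univ (fun x => G x - M / 2 * x ^ 2))
    (lam : ℝ) (hlam : 0 < lam) :
    let tstar : ℝ → ℝ := fun c => max 0 (Function.invFun (deriv G) (c / lam))
    let g : ℝ → ℝ := fun c => ⨆ t : Set.Ici (0 : ℝ), ((t : ℝ) * c - lam * G t)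
    -- the maximizer map is (1/(λM))-Lipschitz
    LipschitzWith (1 / (lam * M)).toNNReal tstar
    -- g is differentiable with derivative `tstar`
    ∧ (∀ c : ℝ, HasDerivAt g (tstar c) c)
    -- hence `g` is (1/(λM))-smooth: its derivative is (1/(λM))-Lipschitz
    ∧ LipschitzWith (1 / (lam * M)).toNNReal (deriv g) := by
  intro tstar g
  have hmono : ∀ x y, x ≤ y → M * (y - x) ≤ deriv G y - deriv G x :=
    fun x y => mul_sub_le_deriv_sub_deriv_of_convexOn_sub_sq hdiff hconv
  have hsurj := surjective_of_hasDerivAt_of_mul_sub_le hM hmono fun x => (hdiff x).hasDerivAt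
  have hGconv : ConvexOn ℝ univ G :=
    Monotone.convexOn_univ_of_deriv hdiff fun x y hxy => by nlinarith [hmono x y hxy]
  have hlip : LipschitzWith (1 / (lam * M)).toNNReal tstar :=
    lipschitzWith_max_zero_invFun_div hM hmono hsurj hlam
  have hmax (c : ℝ) : IsMaxOn (fun t => t * c - lam * G t) (Ici 0) (tstar c) :=
    isMaxOn_mul_sub_mul_max_zero_invFun_deriv hGconv hdiff hsurj hlam c
  have hg (c : ℝ) : g c = tstar c * c - lam * G (tstar c) :=
    (hmax c).iSup_eq (le_max_left _ _)
  have hderiv (c : ℝ) : HasDerivAt g (tstar c) c := by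
    refine hasDerivAt_of_forall_add_mul_sub_le (fun a b => ?_) hlip.continuous.continuousAt
    rw [hg, hg]
    have : tstar a * b - lam * G (tstar a) ≤ tstar b * b - lam * G (tstar b) :=
      hmax b (le_max_left _ _ : (0 : ℝ) ≤ tstar a)
    linarith
  refine ⟨hlip, hderiv, ?_⟩
  rwa [funext fun c => (hderiv c).deriv]

/-- Lipschitz curvature/smoothness of the discriminator's
conjugate `g_λ(c) = sup_{t ≥ 0} (t·c − λ·G(t))`. -/
theorem stmt_14
    (G : ℝ → ℝ) (M : ℝ) (hM : 0 < M)
    (hdiff : Differentiable ℝ G)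
    (hconv : ConvexOn ℝ Set.univ (fun x => G x - M / 2 * x ^ 2))
    (hnonneg : ∀ x, 0 ≤ G x) (hone : G 1 = 0)
    (lam : ℝ) (hlam : 0 < lam) :
    let tstar : ℝ → ℝ := fun c => max 0 (Function.invFun (deriv G) (c / lam))
    let g : ℝ → ℝ := fun c => ⨆ t : Set.Ici (0 : ℝ), ((t : ℝ) * c - lam * G t)
    -- the maximizer map is (1/(λM))-Lipschitz
    LipschitzWith (1 / (lam * M)).toNNReal tstar
    -- g is differentiable with derivative `tstar`
    ∧ (∀ c : ℝ, HasDerivAt g (tstar c) c)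
    -- hence `g` is (1/(λM))-smooth: its derivative is (1/(λM))-Lipschitz
    ∧ LipschitzWith (1 / (lam * M)).toNNReal (deriv g) :=
  stmt_14_general G M hM hdiff hconv lam hlam
end

section
/- Let f : ℝ^d → ℝ be differentiable with L-Lipschitz gradient (L > 0) and bounded below, with f* := inf f. On a probability space with filtration (F_t)_{t≥0}, let the iterates be x_0 ∈ ℝ^d deterministic and x_{t+1} := x_t − η_t·G_t for t = 0,…,T−1, where each x_t is F_t-measurable, G_t is F_{t+1}-measurable and square-integrable, E[G_t | F_t] = ∇f(x_t) almost surely, E[‖G_t − ∇f(x_t)‖² | F_t] ≤ σ² almost surely, and the deterministic stepsizes satisfy 0 < η_t ≤ 1/L. Then Σ_{t=0}^{T−1} (2η_t − L·η_t²)·E[‖∇f(x_t)‖²] ≤ 2(f(x_0) − f*) + L·σ²·Σ_{t=0}^{T−1} η_t². Consequently, if an output index T* ∈ {0,…,T−1} is drawn independently with P(T* = t) = (2η_t − L·η_t²)/Σ_{s=0}^{T−1}(2η_s − L·η_s²), then E[‖∇f(x_{T*})‖²] ≤ ( 2(f(x_0) − f*) + L·σ²·Σ_t η_t² ) / Σ_t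 (2η_t − L·η_t²). (Core convergence bound of Theorem 6.5 for the stochastic approximation algorithm in nonconvex settings.) -/
/-!
Apply the descent lemma `f y ≤ f x + ⟪∇f x, y - x⟫ + (L/2)‖y - x‖²` at `x_{t+1} = x_t - η_t G_t`
and take expectations. Conditioning on `F_t` turns `E⟪∇f(x_t), G_t⟫` into `E‖∇f(x_t)‖²` and
splits `E‖G_t‖²` into `E‖G_t - ∇f(x_t)‖² + E‖∇f(x_t)‖² ≤ σ² + E‖∇f(x_t)‖²`, so
`E f(x_{t+1}) ≤ E f(x_t) - (η_t - Lη_t²/2) E‖∇f(x_t)‖² + (Lη_t²/2) σ²`. Summing over `t`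
telescopes, and `E f(x_T) ≥ f*` gives the first bound. Because `T*` is independent of the
iterates, `E‖∇f(x_{T*})‖² = ∑_t P(T* = t) E‖∇f(x_t)‖²`, which is the first sum divided by
`∑_t (2η_t - Lη_t²)`.
-/

open MeasureTheory ProbabilityTheory Finset
open scoped RealInnerProductSpace NNReal

section Smooth

variable {E : Type*} [NormedAddCommGroup E] [InnerProductSpace ℝ E] [CompleteSpace E]
  {f : E → ℝ} {L : ℝ≥0}

theorem image_le_of_lipschitzWith_gradient (hf : Differentiable ℝ f)
    (hlip : LipschitzWith L (gradient f)) (x y : E) :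
    f y ≤ f x + ⟪gradient f x, y - x⟫ + L / 2 * ‖y - x‖ ^ 2 := by
  set v := y - x
  set φ : ℝ → ℝ := fun t => f (x + t • v) - t * ⟪gradient f x, v⟫ - L / 2 * t ^ 2 * ‖v‖ ^ 2
  have hφ' : ∀ t : ℝ, HasDerivAt φ
      (⟪gradient f (x + t • v) - gradient f x, v⟫ - L * t * ‖v‖ ^ 2) t := by
    intro t
    have hline : HasDerivAt (fun s : ℝ => x + s • v) v t := by
      simpa using ((hasDerivAt_id t).smul_const v).const_add x
    have hcomp := (hasGradientAt_iff_hasFDerivAt.1 (hf _).hasGradientAt).comp_hasDerivAt t hline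
    have hquad := ((hasDerivAt_pow 2 t).const_mul (L / 2 : ℝ)).mul_const (‖v‖ ^ 2)
    refine ((hcomp.sub ((hasDerivAt_id t).mul_const ⟪gradient f x, v⟫)).sub hquad).congr_deriv ?_
    rw [InnerProductSpace.toDual_apply_apply, inner_sub_left]
    ring
  have hanti : AntitoneOn φ (Set.Icc 0 1) := by
    refine antitoneOn_of_deriv_nonpos (convex_Icc 0 1)
      (fun t _ => (hφ' t).continuousAt.continuousWithinAt)
      (fun t _ => (hφ' t).differentiableAt.differentiableWithinAt) fun t ht => ?_
    rw [interior_Icc] at ht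
    have hgrad : ‖gradient f (x + t • v) - gradient f x‖ ≤ L * (t * ‖v‖) := by
      simpa [norm_smul, abs_of_pos ht.1] using hlip.norm_sub_le (x + t • v) x
    rw [(hφ' t).deriv, sub_nonpos]
    calc ⟪gradient f (x + t • v) - gradient f x, v⟫
        ≤ ‖gradient f (x + t • v) - gradient f x‖ * ‖v‖ := real_inner_le_norm _ _
      _ ≤ L * (t * ‖v‖) * ‖v‖ := by gcongr
      _ = L * t * ‖v‖ ^ 2 := by ring
  have h01 := hanti (Set.left_mem_Icc.2 zero_le_one) (Set.right_mem_Icc.2 zero_le_one)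
    zero_le_one
  simp only [φ, v, zero_smul, add_zero, one_smul, add_sub_cancel] at h01
  linarith

end Smooth

section Integrability

variable {Ω E : Type*} [MeasurableSpace Ω] {μ : Measure Ω}
  [NormedAddCommGroup E] [InnerProductSpace ℝ E]

theorem MeasureTheory.MemLp.integrable_inner {v G : Ω → E} (hv : MemLp v 2 μ)
    (hG : MemLp G 2 μ) : Integrable (fun ω => ⟪v ω, G ω⟫) μ :=
  memLp_one_iff_integrable.1 <| hv.of_bilin (fun a b => ⟪a, b⟫) 1 hG (hv.1.inner hG.1)
    (ae_of_all _ fun ω => by simpa using nnnorm_inner_le_nnnorm (𝕜 := ℝ) (v ω) (G ω))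

variable [CompleteSpace E] [IsFiniteMeasure μ] {f : E → ℝ} {L : ℝ≥0} {X : Ω → E}

theorem memLp_gradient_comp (hlip : LipschitzWith L (gradient f)) (hX : MemLp X 2 μ) :
    MemLp (fun ω => gradient f (X ω)) 2 μ := by
  have h := (hlip.sub (LipschitzWith.const (gradient f 0))).comp_memLp (by simp) hX
  convert h.add (memLp_const (gradient f 0)) using 1
  ext1 ω
  simp

theorem integrable_comp_of_lipschitzWith_gradient (hf : Differentiable ℝ f)
    (hlip : LipschitzWith L (gradient f)) (hbdd : BddBelow (Set.range f)) (hX : MemLp X 2 μ) :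
    Integrable (fun ω => f (X ω)) μ := by
  refine integrable_of_le_of_le (hf.continuous.comp_aestronglyMeasurable hX.1)
    (ae_of_all _ fun ω => csInf_le hbdd ⟨X ω, rfl⟩)
    (ae_of_all _ fun ω => image_le_of_lipschitzWith_gradient hf hlip 0 (X ω))
    (integrable_const _) ?_
  simp_rw [sub_zero]
  exact ((integrable_const _).add ((hX.integrable one_le_two).const_inner _)).add
    (hX.integrable_norm_pow'.const_mul _)

end Integrability

section CondExp

variable {Ω E : Type*} {m m0 : MeasurableSpace Ω} {μ : Measure Ω} [IsFiniteMeasure μ]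
  [NormedAddCommGroup E] [InnerProductSpace ℝ E] [CompleteSpace E] {v G : Ω → E}

theorem integral_inner_eq_integral_norm_sq_of_condExp_eq (hm : m ≤ m0)
    (hv : StronglyMeasurable[m] v) (hvL2 : MemLp v 2 μ) (hG : MemLp G 2 μ)
    (hGv : μ[G|m] =ᵐ[μ] v) :
    ∫ ω, ⟪v ω, G ω⟫ ∂μ = ∫ ω, ‖v ω‖ ^ 2 ∂μ := by
  have hpull := condExp_bilin_of_stronglyMeasurable_left (μ := μ) (innerSL ℝ) hv
    (hvL2.integrable_inner hG) (hG.integrable one_le_two)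
  calc ∫ ω, ⟪v ω, G ω⟫ ∂μ = ∫ ω, (μ[fun ω => ⟪v ω, G ω⟫|m]) ω ∂μ := (integral_condExp hm).symm
    _ = ∫ ω, ⟪v ω, v ω⟫ ∂μ := integral_congr_ae <| by
        filter_upwards [hpull, hGv] with ω hpull hGv
        rwa [hGv] at hpull
    _ = ∫ ω, ‖v ω‖ ^ 2 ∂μ := by simp_rw [real_inner_self_eq_norm_sq]

theorem integral_norm_sq_eq_of_condExp_eq (hm : m ≤ m0)
    (hv : StronglyMeasurable[m] v) (hvL2 : MemLp v 2 μ) (hG : MemLp G 2 μ)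
    (hGv : μ[G|m] =ᵐ[μ] v) :
    ∫ ω, ‖G ω‖ ^ 2 ∂μ = ∫ ω, ‖G ω - v ω‖ ^ 2 ∂μ + ∫ ω, ‖v ω‖ ^ 2 ∂μ := by
  have hpt : ∀ ω, ‖G ω‖ ^ 2 = ‖G ω - v ω‖ ^ 2 + 2 * ⟪v ω, G ω⟫ - ‖v ω‖ ^ 2 := fun ω => by
    rw [norm_sub_sq_real, real_inner_comm]
    ring
  have hnoise : Integrable (fun ω => ‖G ω - v ω‖ ^ 2) μ := (hG.sub hvL2).integrable_norm_pow'
  have hinner : Integrable (fun ω => 2 * ⟪v ω, G ω⟫) μ := (hvL2.integrable_inner hG).const_mul 2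
  simp_rw [hpt]
  rw [integral_sub (f := fun ω => ‖G ω - v ω‖ ^ 2 + 2 * ⟪v ω, G ω⟫) (hnoise.add hinner)
      hvL2.integrable_norm_pow', integral_add hnoise hinner,
    integral_const_mul, integral_inner_eq_integral_norm_sq_of_condExp_eq hm hv hvL2 hG hGv]
  ring

end CondExp

section StochasticGradientStep

variable {Ω E : Type*} {m m0 : MeasurableSpace Ω} {μ : Measure Ω} [IsProbabilityMeasure μ]
  [NormedAddCommGroup E] [InnerProductSpace ℝ E] [CompleteSpace E] {f : E → ℝ} {L : ℝ≥0}

theorem integral_image_sub_smul_le (hm : m ≤ m0) (hf : Differentiable ℝ f)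
    (hlip : LipschitzWith L (gradient f)) (hbdd : BddBelow (Set.range f)) {X G : Ω → E}
    (hX : StronglyMeasurable[m] X) (hXL2 : MemLp X 2 μ) (hG : MemLp G 2 μ)
    (hunbiased : μ[G|m] =ᵐ[μ] fun ω => gradient f (X ω)) {σ : ℝ}
    (hvar : ∀ᵐ ω ∂μ, (μ[fun ω => ‖G ω - gradient f (X ω)‖ ^ 2|m]) ω ≤ σ ^ 2) (η : ℝ) :
    ∫ ω, f (X ω - η • G ω) ∂μ ≤ ∫ ω, f (X ω) ∂μ
      - (η - L * η ^ 2 / 2) * ∫ ω, ‖gradient f (X ω)‖ ^ 2 ∂μ + L * η ^ 2 / 2 * σ ^ 2 := by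
  set v := fun ω => gradient f (X ω)
  have hv : StronglyMeasurable[m] v := hlip.continuous.comp_stronglyMeasurable hX
  have hvL2 : MemLp v 2 μ := memLp_gradient_comp hlip hXL2
  have hnoise : ∫ ω, ‖G ω - v ω‖ ^ 2 ∂μ ≤ σ ^ 2 := by
    rw [← integral_condExp hm]
    simpa using integral_mono_ae integrable_condExp (integrable_const (σ ^ 2)) hvar
  have hpt : ∀ ω, f (X ω - η • G ω) ≤
      f (X ω) - η * ⟪v ω, G ω⟫ + L / 2 * η ^ 2 * ‖G ω‖ ^ 2 := fun ω => by
    have h := image_le_of_lipschitzWith_gradient hf hlip (X ω) (X ω - η • G ω)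
    rwa [sub_sub_cancel_left, inner_neg_right, real_inner_smul_right, norm_neg, norm_smul,
      Real.norm_eq_abs, mul_pow, sq_abs, ← sub_eq_add_neg, ← mul_assoc] at h
  have hint : Integrable (fun ω => f (X ω) - η * ⟪v ω, G ω⟫) μ :=
    (integrable_comp_of_lipschitzWith_gradient hf hlip hbdd hXL2).sub
      ((hvL2.integrable_inner hG).const_mul η)
  have hcoef : (0 : ℝ) ≤ L / 2 * η ^ 2 := by positivity
  calc ∫ ω, f (X ω - η • G ω) ∂μ
      ≤ ∫ ω, (f (X ω) - η * ⟪v ω, G ω⟫ + L / 2 * η ^ 2 * ‖G ω‖ ^ 2) ∂μ :=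
        integral_mono (integrable_comp_of_lipschitzWith_gradient hf hlip hbdd
          (hXL2.sub (hG.const_smul η))) (hint.add (hG.integrable_norm_pow'.const_mul _)) hpt
    _ = ∫ ω, f (X ω) ∂μ - η * ∫ ω, ‖v ω‖ ^ 2 ∂μ
          + L / 2 * η ^ 2 * (∫ ω, ‖G ω - v ω‖ ^ 2 ∂μ + ∫ ω, ‖v ω‖ ^ 2 ∂μ) := by
        rw [integral_add hint (hG.integrable_norm_pow'.const_mul _),
          integral_sub (integrable_comp_of_lipschitzWith_gradient hf hlip hbdd hXL2)
            ((hvL2.integrable_inner hG).const_mul η), integral_const_mul, integral_const_mul,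
          integral_inner_eq_integral_norm_sq_of_condExp_eq hm hv hvL2 hG hunbiased,
          integral_norm_sq_eq_of_condExp_eq hm hv hvL2 hG hunbiased]
    _ ≤ _ := by linarith [mul_le_mul_of_nonneg_left hnoise hcoef]

end StochasticGradientStep

theorem sum_mul_le_of_le_sub_mul_add {F g η : ℕ → ℝ} {L c : ℝ}
    (h : ∀ t, F (t + 1) ≤ F t - (η t - L * η t ^ 2 / 2) * g t + L * η t ^ 2 / 2 * c) (T : ℕ) :
    ∑ t ∈ range T, (2 * η t - L * η t ^ 2) * g t
      ≤ 2 * (F 0 - F T) + L * c * ∑ t ∈ range T, η t ^ 2 := by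
  induction T with
  | zero => simp
  | succ T ih =>
    rw [sum_range_succ, sum_range_succ]
    linarith [h T]

theorem integral_apply_of_indepFun {Ω : Type*} [MeasurableSpace Ω] {μ : Measure Ω}
    {τ : Ω → ℕ} {Y : Ω → ℕ → ℝ} (hτ : Measurable τ) (hY : Measurable Y)
    (hYint : ∀ t, Integrable (fun ω => Y ω t) μ) (hindep : IndepFun τ Y μ) {T : ℕ}
    (hτT : ∀ t, T ≤ t → μ {ω | τ ω = t} = 0) :
    ∫ ω, Y ω (τ ω) ∂μ = ∑ t ∈ range T, μ.real {ω | τ ω = t} * ∫ ω, Y ω t ∂μ := by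
  have hlt : ∀ᵐ ω ∂μ, τ ω < T := by
    have : ∀ t, ∀ᵐ ω ∂μ, τ ω = t → t < T := fun t => by
      by_cases ht : t < T
      · exact ae_of_all _ fun _ _ => ht
      · filter_upwards [measure_eq_zero_iff_ae_notMem.1 (hτT t (not_lt.1 ht))] with ω hω hτω
        exact absurd hτω hω
    filter_upwards [ae_all_iff.2 this] with ω hω using hω _ rfl
  have hsplit : (fun ω => Y ω (τ ω)) =ᵐ[μ]
      fun ω => ∑ t ∈ range T, (τ ⁻¹' {t}).indicator (fun ω => Y ω t) ω := by
    filter_upwards [hlt] with ω hω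
    rw [sum_eq_single_of_mem (τ ω) (mem_range.2 hω) fun t _ ht => by
      simp [Set.indicator, Ne.symm ht]]
    simp
  have hindep' := (IndepFun_iff_Indep _ _ _).1 hindep
  rw [integral_congr_ae hsplit, integral_finsetSum _ fun t _ =>
    (hYint t).indicator (hτ (measurableSet_singleton t))]
  refine sum_congr rfl fun t _ => ?_
  rw [integral_indicator (hτ (measurableSet_singleton t))]
  exact hindep'.setIntegral_eq_mul hτ.comap_le hY.aemeasurable
    ⟨{t}, measurableSet_singleton t, rfl⟩ (measurable_pi_apply t).aestronglyMeasurable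

theorem integral_apply_le_div_of_indepFun {Ω : Type*} [MeasurableSpace Ω] {μ : Measure Ω}
    {τ : Ω → ℕ} {Y : Ω → ℕ → ℝ} (hτ : Measurable τ) (hY : Measurable Y)
    (hYint : ∀ t, Integrable (fun ω => Y ω t) μ) (hindep : IndepFun τ Y μ) {T : ℕ}
    {w : ℕ → ℝ} (hw : ∀ t, 0 ≤ w t)
    (hlaw : ∀ t, μ {ω | τ ω = t} =
      ENNReal.ofReal (if t < T then w t / ∑ s ∈ range T, w s else 0))
    {B : ℝ} (hB : ∑ t ∈ range T, w t * ∫ ω, Y ω t ∂μ ≤ B) :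
    ∫ ω, Y ω (τ ω) ∂μ ≤ B / ∑ t ∈ range T, w t := by
  have hW : 0 ≤ ∑ t ∈ range T, w t := sum_nonneg fun t _ => hw t
  rw [integral_apply_of_indepFun hτ hY hYint hindep fun t ht => by
    rw [hlaw, if_neg (not_lt.2 ht), ENNReal.ofReal_zero]]
  calc ∑ t ∈ range T, μ.real {ω | τ ω = t} * ∫ ω, Y ω t ∂μ
      = (∑ t ∈ range T, w t * ∫ ω, Y ω t ∂μ) / ∑ t ∈ range T, w t := by
        rw [sum_div]
        refine sum_congr rfl fun t ht => ?_
        rw [measureReal_def, hlaw, if_pos (mem_range.1 ht),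
          ENNReal.toReal_ofReal (div_nonneg (hw t) hW)]
        ring
    _ ≤ B / ∑ t ∈ range T, w t := div_le_div_of_nonneg_right hB hW

theorem stmt_16_general
    {d : ℕ}
    (f : EuclideanSpace ℝ (Fin d) → ℝ)
    (L : ℝ) (hL : 0 < L)
    (hdiff : Differentiable ℝ f)
    (hlip : LipschitzWith L.toNNReal (fun x => gradient f x))
    (hbdd : BddBelow (Set.range f))
    (fstar : ℝ) (hfstar : fstar = sInf (Set.range f))
    {Ω₀ : Type*} [m : MeasurableSpace Ω₀]
    (Pr : Measure Ω₀) [IsProbabilityMeasure Pr]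
    (ℱ : ℕ → MeasurableSpace Ω₀) (hle : ∀ t, ℱ t ≤ m)
    (T : ℕ)
    (η : ℕ → ℝ) (hη : ∀ t, 0 < η t ∧ η t ≤ 1 / L)
    (x0 : EuclideanSpace ℝ (Fin d))
    (x : ℕ → Ω₀ → EuclideanSpace ℝ (Fin d))
    (Gs : ℕ → Ω₀ → EuclideanSpace ℝ (Fin d))
    (hx0 : ∀ ω, x 0 ω = x0)
    (hiter : ∀ t ω, x (t + 1) ω = x t ω - η t • Gs t ω)
    (hxmeas : ∀ t, StronglyMeasurable[ℱ t] (x t))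
    (hGmeas : ∀ t, StronglyMeasurable[ℱ (t + 1)] (Gs t))
    (hGsq : ∀ t, Integrable (fun ω => ‖Gs t ω‖ ^ 2) Pr)
    (hunbiased : ∀ t, (Pr[Gs t|ℱ t]) =ᵐ[Pr] fun ω => gradient f (x t ω))
    (σ : ℝ)
    (hvar : ∀ t, ∀ᵐ ω ∂Pr,
      (Pr[fun ω' => ‖Gs t ω' - gradient f (x t ω')‖ ^ 2|ℱ t]) ω ≤ σ ^ 2) :
    (∑ t ∈ Finset.range T,
        (2 * η t - L * η t ^ 2) * ∫ ω, ‖gradient f (x t ω)‖ ^ 2 ∂Pr)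
      ≤ 2 * (f x0 - fstar) + L * σ ^ 2 * ∑ t ∈ Finset.range T, η t ^ 2
    ∧ ∀ Tstar : Ω₀ → ℕ, Measurable Tstar →
        IndepFun Tstar (fun ω => fun t => x t ω) Pr →
        (∀ t : ℕ, Pr {ω | Tstar ω = t} =
          ENNReal.ofReal (if t < T then
            (2 * η t - L * η t ^ 2) /
              (∑ s ∈ Finset.range T, (2 * η s - L * η s ^ 2))
          else 0)) →
        (∫ ω, ‖gradient f (x (Tstar ω) ω)‖ ^ 2 ∂Pr) ≤
          (2 * (f x0 - fstar) + L * σ ^ 2 * ∑ t ∈ Finset.range T, η t ^ 2) /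
            (∑ t ∈ Finset.range T, (2 * η t - L * η t ^ 2)) := by
  have hGL2 : ∀ t, MemLp (Gs t) 2 Pr := fun t =>
    (memLp_two_iff_integrable_sq_norm ((hGmeas t).mono (hle _)).aestronglyMeasurable).2 (hGsq t)
  have hxL2 : ∀ t, MemLp (x t) 2 Pr := fun t => by
    induction t with
    | zero => simpa [funext hx0] using memLp_const x0
    | succ t ih =>
      rw [show x (t + 1) = x t - η t • Gs t from funext (hiter t)]
      exact ih.sub ((hGL2 t).const_smul (η t))
  have hstep : ∀ t, ∫ ω, f (x (t + 1) ω) ∂Pr ≤ ∫ ω, f (x t ω) ∂Pr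
      - (η t - L * η t ^ 2 / 2) * ∫ ω, ‖gradient f (x t ω)‖ ^ 2 ∂Pr + L * η t ^ 2 / 2 * σ ^ 2 :=
    fun t => by
      simpa only [hiter, Real.coe_toNNReal _ hL.le] using integral_image_sub_smul_le (hle t)
        hdiff hlip hbdd (hxmeas t) (hxL2 t) (hGL2 t) (hunbiased t) (hvar t) (η t)
  have hfstar_le : fstar ≤ ∫ ω, f (x T ω) ∂Pr := by
    simpa using integral_mono (integrable_const fstar)
      (integrable_comp_of_lipschitzWith_gradient hdiff hlip hbdd (hxL2 T))
      fun ω => hfstar ▸ csInf_le hbdd ⟨x T ω, rfl⟩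
  have hdescent := sum_mul_le_of_le_sub_mul_add (F := fun t => ∫ ω, f (x t ω) ∂Pr)
    (g := fun t => ∫ ω, ‖gradient f (x t ω)‖ ^ 2 ∂Pr) hstep T
  simp only [hx0, integral_const, probReal_univ, one_smul] at hdescent
  have hpart1 : ∑ t ∈ range T, (2 * η t - L * η t ^ 2) * ∫ ω, ‖gradient f (x t ω)‖ ^ 2 ∂Pr
      ≤ 2 * (f x0 - fstar) + L * σ ^ 2 * ∑ t ∈ range T, η t ^ 2 := by linarith
  refine ⟨hpart1, fun Tstar hTstar hindep hdist => ?_⟩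
  have hw : ∀ t, 0 ≤ 2 * η t - L * η t ^ 2 := fun t => by
    have := (le_div_iff₀ hL).1 (hη t).2
    nlinarith [(hη t).1]
  have hgrad_sq : Measurable fun y : EuclideanSpace ℝ (Fin d) => ‖gradient f y‖ ^ 2 :=
    (hlip.continuous.norm.pow 2).measurable
  exact integral_apply_le_div_of_indepFun (Y := fun ω t => ‖gradient f (x t ω)‖ ^ 2) hTstar
    (measurable_pi_lambda _ fun t => hgrad_sq.comp ((hxmeas t).mono (hle t)).measurable)
    (fun t => (memLp_gradient_comp hlip (hxL2 t)).integrable_norm_pow')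
    (hindep.comp measurable_id (measurable_pi_lambda _ fun t => hgrad_sq.comp
      (measurable_pi_apply t))) hw hdist hpart1

/-- core convergence bound of Theorem 6.5 for the stochastic
approximation algorithm in nonconvex settings. -/
theorem stmt_16
    {d : ℕ}
    (f : EuclideanSpace ℝ (Fin d) → ℝ)
    (L : ℝ) (hL : 0 < L)
    (hdiff : Differentiable ℝ f)
    (hlip : LipschitzWith L.toNNReal (fun x => gradient f x))
    (hbdd : BddBelow (Set.range f))
    (fstar : ℝ) (hfstar : fstar = sInf (Set.range f))
    {Ω₀ : Type*} [m : MeasurableSpace Ω₀]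
    (Pr : Measure Ω₀) [IsProbabilityMeasure Pr]
    (ℱ : ℕ → MeasurableSpace Ω₀) (hmono : Monotone ℱ) (hle : ∀ t, ℱ t ≤ m)
    (T : ℕ) (hT : 0 < T)
    (η : ℕ → ℝ) (hη : ∀ t, 0 < η t ∧ η t ≤ 1 / L)
    (x0 : EuclideanSpace ℝ (Fin d))
    (x : ℕ → Ω₀ → EuclideanSpace ℝ (Fin d))
    (Gs : ℕ → Ω₀ → EuclideanSpace ℝ (Fin d))
    (hx0 : ∀ ω, x 0 ω = x0)
    (hiter : ∀ t ω, x (t + 1) ω = x t ω - η t • Gs t ω)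
    (hxmeas : ∀ t, StronglyMeasurable[ℱ t] (x t))
    (hGmeas : ∀ t, StronglyMeasurable[ℱ (t + 1)] (Gs t))
    (hGsq : ∀ t, Integrable (fun ω => ‖Gs t ω‖ ^ 2) Pr)
    (hunbiased : ∀ t, (Pr[Gs t|ℱ t]) =ᵐ[Pr] fun ω => gradient f (x t ω))
    (σ : ℝ) (hσ : 0 ≤ σ)
    (hvar : ∀ t, ∀ᵐ ω ∂Pr,
      (Pr[fun ω' => ‖Gs t ω' - gradient f (x t ω')‖ ^ 2|ℱ t]) ω ≤ σ ^ 2) :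
    (∑ t ∈ Finset.range T,
        (2 * η t - L * η t ^ 2) * ∫ ω, ‖gradient f (x t ω)‖ ^ 2 ∂Pr)
      ≤ 2 * (f x0 - fstar) + L * σ ^ 2 * ∑ t ∈ Finset.range T, η t ^ 2
    ∧ ∀ Tstar : Ω₀ → ℕ, Measurable Tstar →
        IndepFun Tstar (fun ω => fun t => x t ω) Pr →
        (∀ t : ℕ, Pr {ω | Tstar ω = t} =
          ENNReal.ofReal (if t < T then
            (2 * η t - L * η t ^ 2) /
              (∑ s ∈ Finset.range T, (2 * η s - L * η s ^ 2))
          else 0)) →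
        (∫ ω, ‖gradient f (x (Tstar ω) ω)‖ ^ 2 ∂Pr) ≤
          (2 * (f x0 - fstar) + L * σ ^ 2 * ∑ t ∈ Finset.range T, η t ^ 2) /
            (∑ t ∈ Finset.range T, (2 * η t - L * η t ^ 2)) :=
  stmt_16_general f L hL hdiff hlip hbdd fstar hfstar (m := m) Pr ℱ hle T η hη x0 x Gs hx0 hiter
    hxmeas hGmeas hGsq hunbiased σ hvar
end

section
/- Let Ω be a finite nonempty collection of measurable functions S × A → [0,C] and let Q be a nonempty collection of measurable functions on S × A uniformly bounded in absolute value by V̄. Fix δ ∈ (0,1) and set σ_n := (2CV̄/(1−γ))·( √(2 ln(2|Ω|/δ)/n) + 2 ln(2|Ω|/δ)/(3n) ). Define J⁺_n(π) := inf_{τ∈Ω}( (1/(n(1−γ)))·Σ_{i=1}^n r_i·τ(s_i,a_i) + sup_{q∈Q} M̂_n(q,τ) + σ_n ) and J⁻_n(π) := sup_{τ∈Ω}( (1/(n(1−γ)))·Σ_{i=1}^n r_i·τ(s_i,a_i) − sup_{q∈Q} M̂_n(−q,τ) − σ_n ). Suppose there exist τ* ∈ Ω, c₀ ≥ 0 and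 ν ≥ 0 such that, pointwise on the realized sample, |L̂_n(q,τ*) − (q(s⁰,π) − J(π))| ≤ c₀/((1−γ)·n^{1/(1+ν)}) for all q ∈ Q. Then the interval length satisfies J⁺_n(π) − J⁻_n(π) ≤ 2c₀/((1−γ)·n^{1/(1+ν)}) + 2σ_n. (Finite-class instance of the finite-sample tightness bound of Theorem 6.1.) -/
open MeasureTheory ProbabilityTheory

/-- finite-class instance of the finite-sample tightness
bound of Theorem 6.1. -/
theorem stmt_17
    {S A : Type*} [MeasurableSpace S] [MeasurableSpace A]
    (γ : ℝ) (hγ0 : 0 ≤ γ) (hγ1 : γ < 1)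
    (r : S × A → ℝ) (hr_meas : Measurable r) (Br : ℝ) (hr_bdd : ∀ x, |r x| ≤ Br)
    (P : Kernel (S × A) S) [IsMarkovKernel P]
    (π : Kernel S A) [IsMarkovKernel π]
    (s0 : S)
    (C V : ℝ) (hC : 1 ≤ C) (hV : 0 < V)
    (qpi : S × A → ℝ) (hq_meas : Measurable qpi) (hq_bdd : ∀ x, |qpi x| ≤ V)
    (hBellman : ∀ x, qpi x = r x + γ * bellOp P π qpi x)
    (n : ℕ) (hn : 0 < n)
    (sa : Fin n → S × A) (rew : Fin n → ℝ) (s' : Fin n → S)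
    (Ωfin : Finset ((S × A) → ℝ)) (hΩne : Ωfin.Nonempty)
    (hΩ : ∀ τ ∈ Ωfin, Measurable τ ∧ ∀ x, τ x ∈ Set.Icc 0 C)
    (Qset : Set ((S × A) → ℝ)) (hQne : Qset.Nonempty)
    (hQ : ∀ q ∈ Qset, Measurable q ∧ ∀ x, |q x| ≤ V)
    (δ : ℝ) (hδ : δ ∈ Set.Ioo (0 : ℝ) 1)
    (τstar : (S × A) → ℝ) (hτstar : τstar ∈ Ωfin)
    (c0 ν : ℝ) (hc0 : 0 ≤ c0) (hν : 0 ≤ ν)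
    (happrox : ∀ q ∈ Qset,
      |(1 / (n * (1 - γ))) *
          (∑ i, τstar (sa i) * (q (sa i) - rew i - γ * actInt π q (s' i)))
        - (actInt π q s0 - actInt π qpi s0)|
        ≤ c0 / ((1 - γ) * (n : ℝ) ^ ((1 : ℝ) / (1 + ν)))) :
    -- M̂_n(q,τ) on the realized sample
    let Mh : ((S × A) → ℝ) → ((S × A) → ℝ) → ℝ := fun q τ =>
      (1 / (n * (1 - γ))) *
          (∑ i, τ (sa i) * (γ * actInt π q (s' i) - q (sa i)))
        + actInt π q s0
    -- the uncertainty deviation σ_n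
    let σn : ℝ := (2 * C * V / (1 - γ)) *
      (Real.sqrt (2 * Real.log (2 * Ωfin.card / δ) / n)
        + 2 * Real.log (2 * Ωfin.card / δ) / (3 * n))
    -- confidence bounds optimized over the class Ω
    let Jp : ℝ := ⨅ τ : Ωfin,
      ((1 / (n * (1 - γ))) * (∑ i, rew i * τ.1 (sa i))
        + (⨆ q : Qset, Mh q.1 τ.1) + σn)
    let Jm : ℝ := ⨆ τ : Ωfin,
      ((1 / (n * (1 - γ))) * (∑ i, rew i * τ.1 (sa i))
        - (⨆ q : Qset, Mh (fun x => -(q.1 x)) τ.1) - σn)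
    Jp - Jm ≤ 2 * c0 / ((1 - γ) * (n : ℝ) ^ ((1 : ℝ) / (1 + ν))) + 2 * σn := by
  intro Mh σn Jp Jm
  have hQne' : Nonempty Qset := hQne.to_subtype
  have hΩne' : Nonempty Ωfin := hΩne.to_subtype
  set ε : ℝ := c0 / ((1 - γ) * (n : ℝ) ^ ((1 : ℝ) / (1 + ν))) with hε
  set J : ℝ := actInt π qpi s0 with hJ
  set Rτ : ℝ := (1 / (n * (1 - γ))) * (∑ i, rew i * τstar (sa i)) with hRτ
  -- key algebraic identity
  have heq : ∀ q : (S × A) → ℝ, Mh q τstar = actInt π q s0 - Rτ -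
      ((1 / (n * (1 - γ))) *
        (∑ i, τstar (sa i) * (q (sa i) - rew i - γ * actInt π q (s' i)))) := by
    intro q
    simp only [Mh, Rτ]
    have hsum : ∑ i, τstar (sa i) * (γ * actInt π q (s' i) - q (sa i)) =
        ∑ i, (-(rew i * τstar (sa i)) -
          τstar (sa i) * (q (sa i) - rew i - γ * actInt π q (s' i))) :=
      Finset.sum_congr rfl fun i _ => by ring
    rw [hsum, Finset.sum_sub_distrib, Finset.sum_neg_distrib]
    ring
  have hub : ∀ q ∈ Qset, Mh q τstar ≤ J - Rτ + ε := by
    intro q hq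
    have h := abs_le.mp (happrox q hq)
    rw [heq q]
    linarith [h.1]
  have hlb : ∀ q ∈ Qset, J - Rτ - ε ≤ Mh q τstar := by
    intro q hq
    have h := abs_le.mp (happrox q hq)
    rw [heq q]
    linarith [h.2]
  have hnegM : ∀ q : (S × A) → ℝ, Mh (fun x => -(q x)) τstar = - Mh q τstar := by
    intro q
    have hA : ∀ s, actInt π (fun x => -(q x)) s = - actInt π q s := by
      intro s
      simp [actInt, integral_neg]
    simp only [Mh, hA]
    have hsum : ∑ i, τstar (sa i) * (γ * -actInt π q (s' i) - -q (sa i)) =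
        ∑ i, -(τstar (sa i) * (γ * actInt π q (s' i) - q (sa i))) :=
      Finset.sum_congr rfl fun i _ => by ring
    rw [hsum, Finset.sum_neg_distrib]
    ring
  have hJp : Jp ≤ J + ε + σn := by
    have hle := ciInf_le (f := fun τ : Ωfin =>
      ((1 / (n * (1 - γ))) * (∑ i, rew i * τ.1 (sa i))
        + (⨆ q : Qset, Mh q.1 τ.1) + σn)) (Set.Finite.bddBelow (Set.finite_range _))
      ⟨τstar, hτstar⟩
    refine le_trans hle ?_
    have hsup : (⨆ q : Qset, Mh q.1 τstar) ≤ J - Rτ + ε :=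
      ciSup_le fun q => hub q.1 q.2
    simp only
    rw [← hRτ]
    linarith
  have hJm : J - ε - σn ≤ Jm := by
    have hle := le_ciSup (f := fun τ : Ωfin =>
      ((1 / (n * (1 - γ))) * (∑ i, rew i * τ.1 (sa i))
        - (⨆ q : Qset, Mh (fun x => -(q.1 x)) τ.1) - σn)) (Set.Finite.bddAbove (Set.finite_range _))
      ⟨τstar, hτstar⟩
    refine le_trans ?_ hle
    have hsup : (⨆ q : Qset, Mh (fun x => -(q.1 x)) τstar) ≤ ε + Rτ - J := by
      refine ciSup_le fun q => ?_
      rw [hnegM q.1]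
      have := hlb q.1 q.2
      linarith
    simp only
    rw [← hRτ]
    linarith
  have h2ε : 2 * c0 / ((1 - γ) * (n : ℝ) ^ ((1 : ℝ) / (1 + ν))) = 2 * ε := by
    rw [hε]; ring
  rw [h2ε]
  linarith
end
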